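/- arXiv:1512.06684 — 5 statements merged into one kernel-verified Lean document; each statement's English description precedes it below -/
import Mathlib

section
/- (Improved isoperimetric inequality) Let M be an oval of length L_M enclosing area A_M, and let Ã_{E_{1/2}(M)} be the oriented area of the Wigner caustic of M. Then L_M² ≥ 4π·A_M + 8π·|Ã_{E_{1/2}(M)}|, with equality if and only if M is a curve of constant width. -/
open Real MeasureTheory Set intervalIntegral AddCircle
open scoped ENNReal

noncomputable section ImprovedIso

/-- Fourier coefficient on `[0, 2π]`. -/
abbrev FC (g : ℝ → ℂ) (n : ℤ) : ℂ := fourierCoeffOn Real.two_pi_pos g n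

lemma integral_shift_pi {E : Type*} [NormedAddCommGroup E] [NormedSpace ℝ E]
    (g : ℝ → E) (hper : Function.Periodic g (2*π)) :
    ∫ x in (0:ℝ)..2*π, g (x + π) = ∫ x in (0:ℝ)..2*π, g x := by
  rw [intervalIntegral.integral_comp_add_right]
  have := hper.intervalIntegral_add_eq π 0
  norm_num at this ⊢
  convert this using 2
  ring

lemma integral_antiperiodic_zero (g : ℝ → ℝ) (hper : Function.Periodic g (2*π))
    (hanti : ∀ x, g (x + π) = - g x) :
    ∫ x in (0:ℝ)..2*π, g x = 0 := by
  have h := integral_shift_pi g hper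
  simp only [hanti, intervalIntegral.integral_neg] at h
  linarith

lemma fourier_coe_pi (n : ℤ) :
    fourier (-n) ((π : ℝ) : AddCircle (2*π - 0)) = Complex.exp (-(n * π * Complex.I)) := by
  rw [fourier_coe_apply]
  congr 1
  have hπ : (π:ℂ) ≠ 0 := Complex.ofReal_ne_zero.mpr Real.pi_ne_zero
  field_simp
  push_cast
  ring

lemma fourier_coe_add (n : ℤ) (x y : ℝ) :
    fourier n ((x + y : ℝ) : AddCircle (2*π - 0)) =
      fourier n ((x:ℝ) : AddCircle (2*π - 0)) * fourier n ((y:ℝ) : AddCircle (2*π - 0)) := by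
  simp only [fourier_coe_apply]
  rw [← Complex.exp_add]
  congr 1
  push_cast
  ring

lemma exp_neg_even (k : ℤ) : Complex.exp (-(((2*k : ℤ):ℂ) * π * Complex.I)) = 1 := by
  have : -(((2*k : ℤ):ℂ) * π * Complex.I) = (-k : ℤ) * (2 * π * Complex.I) := by push_cast; ring
  rw [this, Complex.exp_int_mul_two_pi_mul_I]

lemma exp_neg_odd (k : ℤ) : Complex.exp (-(((2*k+1 : ℤ):ℂ) * π * Complex.I)) = -1 := by
  have : -(((2*k+1 : ℤ):ℂ) * π * Complex.I) = (-(k+1) : ℤ) * (2 * π * Complex.I) + π * Complex.I := by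
    push_cast; ring
  rw [this, Complex.exp_add, Complex.exp_int_mul_two_pi_mul_I, Complex.exp_pi_mul_I, one_mul]

/-- Vanishing of Fourier coefficients from a symmetry `g (x+π) = ε * g x`. -/
lemma FC_vanish (g : ℝ → ℂ) (hper : Function.Periodic g (2*π))
    (ε : ℂ) (hsym : ∀ x, g (x + π) = ε * g x) (n : ℤ)
    (hfac : Complex.exp (-(n * π * Complex.I)) * ε = -1) :
    FC g n = 0 := by
  set h : ℝ → ℂ := fun x => fourier (-n) ((x:ℝ) : AddCircle (2*π - 0)) • g x with hh
  have hfper : Function.Periodic (fun x:ℝ => fourier (-n) ((x:ℝ) : AddCircle (2*π-0))) (2*π) := by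
    intro x
    have : ((x + 2*π : ℝ) : AddCircle (2*π - 0)) = ((x:ℝ) : AddCircle (2*π-0)) := by
      have := AddCircle.coe_add_period (2*π - 0) x
      simpa using this
    simp [this]
  have hhper : Function.Periodic h (2*π) := by
    intro x; simp only [hh, hfper x, hper x]
  have hshift : ∫ x in (0:ℝ)..2*π, h (x + π) = ∫ x in (0:ℝ)..2*π, h x :=
    integral_shift_pi h hhper
  have hkey : ∀ x, h (x + π) = (Complex.exp (-(n * π * Complex.I)) * ε) • h x := by
    intro x
    simp only [hh, fourier_coe_add, hsym, fourier_coe_pi, smul_eq_mul]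
    ring
  have hzero : ∫ x in (0:ℝ)..2*π, h x = 0 := by
    simp only [hkey, intervalIntegral.integral_smul, hfac] at hshift
    simp only [neg_smul, one_smul] at hshift
    linear_combination (-(1:ℂ)/2) * hshift
  have : FC g n = (1/(2*π - 0):ℝ) • ∫ x in (0:ℝ)..(2*π), h x := by
    rw [FC, fourierCoeffOn_eq_integral]
  rw [this, hzero, smul_zero]

/-- Fourier coefficient of the derivative. -/
lemma FC_deriv (g g' : ℝ → ℂ) (hd : ∀ x, HasDerivAt g (g' x) x) (hc : Continuous g')
    (hper : g (2*π) = g 0) (n : ℤ) :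
    FC g' n = Complex.I * n * FC g n := by
  rcases eq_or_ne n 0 with rfl | hn
  · simp only [Int.cast_zero, mul_zero, zero_mul]
    have h1 : FC g' 0 = (1/(2*π - 0):ℝ) • ∫ x in (0:ℝ)..(2*π),
        fourier (-0) ((x:ℝ) : AddCircle (2*π-0)) • g' x := by
      rw [FC, fourierCoeffOn_eq_integral]
    rw [h1]
    have h2 : ∫ x in (0:ℝ)..(2*π), fourier (-0) ((x:ℝ) : AddCircle (2*π-0)) • g' x
        = ∫ x in (0:ℝ)..(2*π), g' x := by
      apply intervalIntegral.integral_congr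
      intro x _
      simp
    rw [h2, intervalIntegral.integral_eq_sub_of_hasDerivAt (fun x _ => hd x)
      (hc.intervalIntegrable _ _), hper, sub_self, smul_zero]
  · have key := fourierCoeffOn_of_hasDerivAt Real.two_pi_pos hn
      (fun x _ => hd x) (hc.intervalIntegrable _ _)
    have h0 : g (2*π) - g 0 = 0 := by rw [hper, sub_self]
    rw [h0, mul_zero, zero_sub] at key
    have hπ : (π:ℂ) ≠ 0 := Complex.ofReal_ne_zero.mpr Real.pi_ne_zero
    have hnC : (n:ℂ) ≠ 0 := Int.cast_ne_zero.mpr hn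
    have hI := Complex.I_ne_zero
    rw [FC, FC, key]
    push_cast
    field_simp
    ring_nf

/-- Parseval's identity over `[0, 2π]`. -/
lemma FC_parseval (g : ℝ → ℂ) (hg : Continuous g) (hper : Function.Periodic g (2*π)) :
    Summable (fun n : ℤ => ‖FC g n‖^2) ∧
    ∑' n : ℤ, ‖FC g n‖^2 = (2*π)⁻¹ * ∫ x in (0:ℝ)..2*π, ‖g x‖^2 := by
  haveI hFc : Fact ((0:ℝ) < 2*π) := ⟨Real.two_pi_pos⟩
  have hend : g 0 = g (2*π) := (hper 0).symm.trans (by norm_num)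
  set F : C(AddCircle (2*π), ℂ) :=
    ⟨AddCircle.liftIco (2*π) 0 g, AddCircle.liftIco_zero_continuous hend hg.continuousOn⟩ with hF
  set fL := ContinuousMap.toLp (E := ℂ) 2 haarAddCircle ℂ F with hfL
  have hcoeff : ∀ n : ℤ, fourierCoeff (fL : AddCircle (2*π) → ℂ) n = FC g n := by
    intro n
    rw [fourierCoeff_toLp]
    have h : fourierCoeff (F : AddCircle (2*π) → ℂ) n
        = fourierCoeff (AddCircle.liftIco (2*π) 0 g) n := rfl
    rw [h, fourierCoeff_liftIco_eq]
    congr 1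
    ring
  have hpar := tsum_sq_fourierCoeff fL
  have hsumm : Summable (fun n : ℤ => ‖FC g n‖^2) := by
    have hmem := lp.memℓp (fourierBasis.repr fL)
    have ht : ((2:ℝ≥0∞)).toReal = (2:ℝ) := by norm_num
    have hsum2 := (memℓp_gen_iff (p := 2) (by rw [ht]; norm_num)).mp hmem
    refine hsum2.congr fun n => ?_
    rw [fourierBasis_repr, hcoeff n, ht, Real.rpow_two]
  refine ⟨hsumm, ?_⟩
  simp_rw [hcoeff] at hpar
  rw [hpar]
  have hmeas : (volume : Measure (AddCircle (2*π))) = ENNReal.ofReal (2*π) • haarAddCircle :=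
    volume_eq_smul_haarAddCircle
  have h1 : ∫ t : AddCircle (2*π), ‖fL t‖^2 ∂haarAddCircle
      = ∫ t : AddCircle (2*π), ‖F t‖^2 ∂haarAddCircle := by
    apply MeasureTheory.integral_congr_ae
    filter_upwards [ContinuousMap.coeFn_toLp (p := 2) (μ := haarAddCircle) (𝕜 := ℂ) F] with t ht
    rw [ht]
  have h2 : ∫ t : AddCircle (2*π), ‖F t‖^2
      = (2*π) * ∫ t : AddCircle (2*π), ‖F t‖^2 ∂haarAddCircle := by
    rw [hmeas, MeasureTheory.integral_smul_measure]
    rw [ENNReal.toReal_ofReal Real.two_pi_pos.le]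
    norm_num
  have h3 : ∫ t : AddCircle (2*π), ‖F t‖^2 = ∫ x in (0:ℝ)..2*π, ‖g x‖^2 := by
    rw [← AddCircle.intervalIntegral_preimage (2*π) 0 (fun t => ‖F t‖^2)]
    rw [zero_add]
    apply intervalIntegral.integral_congr
    intro x hx
    rw [Set.uIcc_of_le Real.two_pi_pos.le] at hx
    rcases lt_or_eq_of_le hx.2 with h | h
    · have : F ((x:ℝ) : AddCircle (2*π)) = g x := AddCircle.liftIco_zero_coe_apply ⟨hx.1, h⟩
      simp only [this]
    · subst h
      have hc : ((2*π : ℝ) : AddCircle (2*π)) = ((0:ℝ) : AddCircle (2*π)) := by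
        have := AddCircle.coe_add_period (2*π) 0
        simpa using this
      have : F ((2*π : ℝ) : AddCircle (2*π)) = g 0 := by
        rw [hc]; exact AddCircle.liftIco_zero_coe_apply ⟨le_refl 0, Real.two_pi_pos⟩
      simp only [this, hend]
  rw [h1, ← h3, h2]
  have h2π : (2*π) ≠ 0 := Real.two_pi_pos.ne'
  field_simp

/-- Generic Wirtinger-type estimate given a lower bound on nonvanishing frequencies. -/
lemma wirtinger_aux (g : ℝ → ℝ) (hg : ContDiff ℝ (⊤ : ℕ∞) g) (hper : Function.Periodic g (2*π))
    (k : ℝ)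
    (hvan : ∀ n : ℤ, FC (fun x => (g x : ℂ)) n ≠ 0 → k ≤ (n:ℝ)^2) :
    k * ∫ x in (0:ℝ)..2*π, g x ^ 2 ≤ ∫ x in (0:ℝ)..2*π, deriv g x ^ 2 := by
  set G : ℝ → ℂ := fun x => (g x : ℂ) with hG
  set G' : ℝ → ℂ := fun x => Complex.ofReal (deriv g x) with hG'
  have hgc : Continuous g := hg.continuous
  have hg'c : Continuous (deriv g) := hg.continuous_deriv (by simp)
  have hdiff : ∀ x, HasDerivAt g (deriv g x) x :=
    fun x => (hg.differentiable (by simp) x).hasDerivAt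
  have hdG : ∀ x, HasDerivAt G (G' x) x := fun x => (hdiff x).ofReal_comp
  have hper' : Function.Periodic (deriv g) (2*π) := by
    intro x
    have h1 : (fun y => g (y + 2*π)) = g := funext hper
    rw [← deriv_comp_add_const g (2*π) x, h1]
  have hGper : Function.Periodic G (2*π) := fun x => by simp [hG, hper x]
  have hG'per : Function.Periodic G' (2*π) := fun x => by simp [hG', hper' x]
  have hPg := FC_parseval G (Complex.continuous_ofReal.comp hgc) hGper
  have hPg' := FC_parseval G' (Complex.continuous_ofReal.comp hg'c) hG'per
  have hFCd : ∀ n : ℤ, FC G' n = Complex.I * n * FC G n := by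
    intro n
    apply FC_deriv G G' hdG (Complex.continuous_ofReal.comp hg'c)
    have := hper 0
    simp only [hG, zero_add] at this ⊢
    exact_mod_cast congrArg (fun r : ℝ => (r:ℂ)) this
  have hnorm : ∀ n : ℤ, ‖FC G' n‖^2 = (n:ℝ)^2 * ‖FC G n‖^2 := by
    intro n
    rw [hFCd n]
    simp [norm_mul, mul_pow, sq_abs]
  have hs1 : Summable (fun n : ℤ => k * ‖FC G n‖^2) := hPg.1.mul_left k
  have hs2 : Summable (fun n : ℤ => (n:ℝ)^2 * ‖FC G n‖^2) := by
    refine hPg'.1.congr fun n => ?_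
    exact (hnorm n)
  have hterm : ∀ n : ℤ, k * ‖FC G n‖^2 ≤ (n:ℝ)^2 * ‖FC G n‖^2 := by
    intro n
    rcases eq_or_ne (FC G n) 0 with h | h
    · simp [h]
    · exact mul_le_mul_of_nonneg_right (hvan n h) (by positivity)
  have htsum : k * ∑' n : ℤ, ‖FC G n‖^2 ≤ ∑' n : ℤ, (n:ℝ)^2 * ‖FC G n‖^2 := by
    rw [← tsum_mul_left]
    exact Summable.tsum_le_tsum hterm hs1 hs2
  have heq2 : ∑' n : ℤ, (n:ℝ)^2 * ‖FC G n‖^2 = ∑' n : ℤ, ‖FC G' n‖^2 := by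
    congr 1; funext n; rw [hnorm n]
  rw [heq2, hPg'.2, hPg.2] at htsum
  have hIg : ∫ x in (0:ℝ)..2*π, ‖G x‖^2 = ∫ x in (0:ℝ)..2*π, g x ^ 2 := by
    apply intervalIntegral.integral_congr
    intro x _
    simp [hG, Complex.norm_real, Real.norm_eq_abs, sq_abs]
  have hIg' : ∫ x in (0:ℝ)..2*π, ‖G' x‖^2 = ∫ x in (0:ℝ)..2*π, deriv g x ^ 2 := by
    apply intervalIntegral.integral_congr
    intro x _
    simp [hG', Complex.norm_real, Real.norm_eq_abs, sq_abs]
  rw [hIg, hIg'] at htsum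
  have h2π : (0:ℝ) < 2*π := Real.two_pi_pos
  calc k * ∫ x in (0:ℝ)..2*π, g x ^ 2
      = (2*π) * (k * ((2*π)⁻¹ * ∫ x in (0:ℝ)..2*π, g x ^ 2)) := by
        field_simp
    _ ≤ (2*π) * ((2*π)⁻¹ * ∫ x in (0:ℝ)..2*π, deriv g x ^ 2) := by
        exact mul_le_mul_of_nonneg_left htsum h2π.le
    _ = ∫ x in (0:ℝ)..2*π, deriv g x ^ 2 := by field_simp

/-- Wirtinger-type inequality for anti-periodic functions. -/
lemma wirtinger_anti (g : ℝ → ℝ) (hg : ContDiff ℝ (⊤ : ℕ∞) g)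
    (hanti : ∀ x, g (x + π) = - g x) :
    ∫ x in (0:ℝ)..2*π, g x ^ 2 ≤ ∫ x in (0:ℝ)..2*π, deriv g x ^ 2 := by
  have hper : Function.Periodic g (2*π) := by
    intro x
    have h1 := hanti x
    have h2 := hanti (x + π)
    have : x + π + π = x + 2*π := by ring
    rw [this] at h2
    rw [h2, h1, neg_neg]
  have := wirtinger_aux g hg hper 1 ?_
  · linarith [this]
  · intro n hn
    rcases Int.even_or_odd n with ⟨k, hk⟩ | ⟨k, hk⟩
    · exfalso
      apply hn
      apply FC_vanish _ (fun x => by simp [hper x]) (-1) (fun x => by simp [hanti x]) n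
      have hnk : n = 2*k := by omega
      rw [hnk]
      rw [exp_neg_even]
      ring
    · have hn0 : n ≠ 0 := by omega
      have : (1:ℝ) ≤ |(n:ℝ)| := by
        rw [← Int.cast_abs]
        exact_mod_cast Int.one_le_abs hn0
      nlinarith [this, sq_abs ((n:ℝ)), abs_nonneg ((n:ℝ))]

/-- Strong Wirtinger-type inequality for π-periodic mean-zero functions. -/
lemma wirtinger_pi_periodic (g : ℝ → ℝ) (hg : ContDiff ℝ (⊤ : ℕ∞) g)
    (hperπ : ∀ x, g (x + π) = g x) (hmean : ∫ x in (0:ℝ)..2*π, g x = 0) :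
    4 * ∫ x in (0:ℝ)..2*π, g x ^ 2 ≤ ∫ x in (0:ℝ)..2*π, deriv g x ^ 2 := by
  have hper : Function.Periodic g (2*π) := by
    intro x
    have h2 := hperπ (x + π)
    have : x + π + π = x + 2*π := by ring
    rw [this] at h2
    rw [h2, hperπ x]
  apply wirtinger_aux g hg hper 4
  intro n hn
  rcases Int.even_or_odd n with ⟨k, hk⟩ | ⟨k, hk⟩
  · rcases eq_or_ne n 0 with rfl | hn0
    · exfalso
      apply hn
      have h1 : FC (fun x => ((g x : ℝ) : ℂ)) 0 = (1/(2*π - 0):ℝ) • ∫ x in (0:ℝ)..(2*π),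
          fourier (-0) ((x:ℝ) : AddCircle (2*π-0)) • ((g x : ℝ) : ℂ) := by
        rw [FC, fourierCoeffOn_eq_integral]
      rw [h1]
      have h2 : ∫ x in (0:ℝ)..(2*π), fourier (-0) ((x:ℝ) : AddCircle (2*π-0)) • ((g x : ℝ):ℂ)
          = ∫ x in (0:ℝ)..(2*π), ((g x : ℝ) : ℂ) := by
        apply intervalIntegral.integral_congr
        intro x _
        simp
      rw [h2, intervalIntegral.integral_ofReal, hmean]
      simp
    · have hk0 : k ≠ 0 := by omega
      have h1 : (1:ℝ) ≤ |(k:ℝ)| := by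
        rw [← Int.cast_abs]; exact_mod_cast Int.one_le_abs hk0
      have h2 : (n:ℝ) = 2*(k:ℝ) := by exact_mod_cast congrArg (Int.cast : ℤ → ℝ) (by omega : n = 2*k)
      rw [h2]
      nlinarith [h1, sq_abs ((k:ℝ)), abs_nonneg ((k:ℝ))]
  · exfalso
    apply hn
    apply FC_vanish _ (fun x => by simp [hper x]) 1 (fun x => by simp [hperπ x]) n
    have hnk : n = 2*k+1 := by omega
    rw [hnk, exp_neg_odd]
    ring

/-- A continuous function whose square integrates to zero vanishes on the interval. -/
lemma eq_zero_of_integral_sq_eq_zero (h : ℝ → ℝ) (hc : Continuous h)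
    (hint : ∫ x in (0:ℝ)..2*π, h x ^ 2 = 0) : ∀ x ∈ Icc (0:ℝ) (2*π), h x = 0 := by
  have h2π := Real.two_pi_pos
  have hae := (intervalIntegral.integral_eq_zero_iff_of_le_of_nonneg_ae h2π.le
    (Filter.Eventually.of_forall fun x => sq_nonneg _)
    ((hc.pow 2).intervalIntegrable _ _)).mp hint
  have hIoo : ∀ x ∈ Ioo (0:ℝ) (2*π), h x = 0 := by
    intro x hx
    by_contra hne
    have hopen : IsOpen {y : ℝ | ¬ (h y ^ 2 = 0)} := isOpen_ne.preimage (hc.pow 2)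
    have hU : IsOpen ({y : ℝ | ¬ (h y ^ 2 = 0)} ∩ Ioo 0 (2*π)) := hopen.inter isOpen_Ioo
    have hne' : ({y : ℝ | ¬ (h y ^ 2 = 0)} ∩ Ioo 0 (2*π)).Nonempty :=
      ⟨x, by simp [pow_eq_zero_iff, hne], hx⟩
    have hpos := hU.measure_pos volume hne'
    have h0 : volume ({y : ℝ | ¬ (h y ^ 2 = 0)} ∩ Ioc 0 (2*π)) = 0 := by
      have h0' := hae
      rw [Filter.EventuallyEq, MeasureTheory.ae_iff] at h0'
      simp only [Pi.zero_apply] at h0'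
      rw [Measure.restrict_apply' measurableSet_Ioc] at h0'
      exact h0'
    have hsub : ({y : ℝ | ¬ (h y ^ 2 = 0)} ∩ Ioo 0 (2*π)) ⊆ ({y : ℝ | ¬ (h y ^ 2 = 0)} ∩ Ioc 0 (2*π)) :=
      inter_subset_inter_right _ Ioo_subset_Ioc_self
    have := measure_mono (μ := volume) hsub
    rw [h0] at this
    exact absurd (le_antisymm this zero_le) hpos.ne'
  have hEq : Set.EqOn h 0 (Ioo 0 (2*π)) := fun x hx => hIoo x hx
  have hcl : Set.EqOn h 0 (closure (Ioo 0 (2*π))) := hEq.closure hc continuous_const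
  intro x hx
  rw [closure_Ioo h2π.ne] at hcl
  exact hcl hx

/-- The improved isoperimetric inequality:
`L_M² ≥ 4πA_M + 8π|Ã_{E_{1/2}(M)}|`, with equality iff `M` has constant width. -/
theorem improved_isoperimetric (p : ℝ → ℝ) (hp : ContDiff ℝ (⊤ : ℕ∞) p)
    (hper : Function.Periodic p (2 * π))
    (hpos : ∀ θ : ℝ, 0 < p θ + deriv (deriv p) θ)
    (q : ℝ → ℝ) (hq : ∀ θ : ℝ, q θ = (p θ - p (θ + π)) / 2)
    (L A At : ℝ)
    (hL : L = ∫ θ in (0:ℝ)..(2 * π), p θ)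
    (hA : A = (1/2) * ∫ θ in (0:ℝ)..(2 * π), (p θ ^ 2 - deriv p θ ^ 2))
    (hAt : At = (1/4) * ∫ θ in (0:ℝ)..(2 * π), (q θ ^ 2 - deriv q θ ^ 2)) :
    L ^ 2 ≥ 4 * π * A + 8 * π * |At| ∧
      (L ^ 2 = 4 * π * A + 8 * π * |At| ↔ ∃ w : ℝ, ∀ θ : ℝ, p θ + p (θ + π) = w) := by
  have h2π : (0:ℝ) < 2*π := Real.two_pi_pos
  have hπ : (0:ℝ) < π := Real.pi_pos
  -- replace q by its formula
  have hqdef : q = fun θ => (p θ - p (θ + π)) / 2 := funext hq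
  subst hqdef
  set qf : ℝ → ℝ := fun θ => (p θ - p (θ + π)) / 2 with hqf
  set c : ℝ := L / (2*π) with hc
  set f : ℝ → ℝ := fun θ => (p θ + p (θ + π)) / 2 - c with hf
  -- smoothness
  have hshift : ContDiff ℝ (⊤ : ℕ∞) (fun θ : ℝ => p (θ + π)) :=
    hp.comp (contDiff_id.add contDiff_const)
  have hqs : ContDiff ℝ (⊤ : ℕ∞) qf := (hp.sub hshift).div_const 2
  have hfs : ContDiff ℝ (⊤ : ℕ∞) f := ((hp.add hshift).div_const 2).sub contDiff_const
  -- derivatives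
  have hdp : ∀ θ, HasDerivAt p (deriv p θ) θ := fun θ => (hp.differentiable (by simp) θ).hasDerivAt
  have hdshift : ∀ θ, HasDerivAt (fun t => p (t + π)) (deriv p (θ + π)) θ :=
    fun θ => HasDerivAt.comp_add_const θ π (hdp (θ + π))
  have hdq : ∀ θ, deriv qf θ = (deriv p θ - deriv p (θ + π)) / 2 :=
    fun θ => (((hdp θ).sub (hdshift θ)).div_const 2).deriv
  have hdf : ∀ θ, deriv f θ = (deriv p θ + deriv p (θ + π)) / 2 :=
    fun θ => ((((hdp θ).add (hdshift θ)).div_const 2).sub_const c).deriv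
  -- periodicity of deriv p
  have hp'per : ∀ θ, deriv p (θ + 2*π) = deriv p θ := by
    intro θ
    have h1 : (fun y => p (y + 2*π)) = p := funext hper
    rw [← deriv_comp_add_const p (2*π) θ, h1]
  -- symmetries
  have hqanti : ∀ θ, qf (θ + π) = - qf θ := by
    intro θ
    have h1 : θ + π + π = θ + 2*π := by ring
    simp only [hqf, h1, hper θ]
    ring
  have hfper : ∀ θ, f (θ + π) = f θ := by
    intro θ
    have h1 : θ + π + π = θ + 2*π := by ring
    simp only [hf, h1, hper θ]
    ring
  have hq'anti : ∀ θ, deriv qf (θ + π) = - deriv qf θ := by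
    intro θ
    have h1 : θ + π + π = θ + 2*π := by ring
    rw [hdq, hdq, h1, hp'per θ]
    ring
  have hf'per : ∀ θ, deriv f (θ + π) = deriv f θ := by
    intro θ
    have h1 : θ + π + π = θ + 2*π := by ring
    rw [hdf, hdf, h1, hp'per θ]
    ring
  have hq2per : Function.Periodic qf (2*π) := by
    intro x
    have h1 : x + 2*π = x + π + π := by ring
    rw [h1, hqanti (x + π), hqanti x, neg_neg]
  have hf2per : Function.Periodic f (2*π) := by
    intro x
    have h1 : x + 2*π = x + π + π := by ring
    rw [h1, hfper (x + π), hfper x]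
  -- continuity
  have hpc : Continuous p := hp.continuous
  have hp'c : Continuous (deriv p) := hp.continuous_deriv (by simp)
  have hqc : Continuous qf := hqs.continuous
  have hq'c : Continuous (deriv qf) := hqs.continuous_deriv (by simp)
  have hfc : Continuous f := hfs.continuous
  have hf'c : Continuous (deriv f) := hfs.continuous_deriv (by simp)
  -- basic zero integrals
  have hIq : ∫ θ in (0:ℝ)..2*π, qf θ = 0 := integral_antiperiodic_zero qf hq2per hqanti
  have hIshift : ∫ θ in (0:ℝ)..2*π, p (θ + π) = L := by
    rw [integral_shift_pi p hper, hL]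
  have hIf : ∫ θ in (0:ℝ)..2*π, f θ = 0 := by
    have hsplit : ∫ θ in (0:ℝ)..2*π, f θ
        = (∫ θ in (0:ℝ)..2*π, (p θ + p (θ + π)) / 2) - ∫ θ in (0:ℝ)..2*π, c := by
      apply intervalIntegral.integral_sub
      · exact ((hpc.add (hpc.comp (continuous_id.add continuous_const))).div_const 2).intervalIntegrable _ _
      · exact intervalIntegrable_const
    have hshiftInt : IntervalIntegrable (fun θ : ℝ => p (θ + π)) volume 0 (2*π) :=
      Continuous.intervalIntegrable (by fun_prop) _ _
    rw [hsplit, intervalIntegral.integral_div, intervalIntegral.integral_add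
      (hpc.intervalIntegrable _ _) hshiftInt,
      ← hL, hIshift, intervalIntegral.integral_const]
    simp only [hc, smul_eq_mul, sub_zero]
    field_simp
    ring
  have hIfq : ∫ θ in (0:ℝ)..2*π, f θ * qf θ = 0 := by
    apply integral_antiperiodic_zero (fun θ => f θ * qf θ) ?_ ?_
    · intro x
      show f (x + 2*π) * qf (x + 2*π) = f x * qf x
      rw [hf2per x, hq2per x]
    · intro x
      show f (x + π) * qf (x + π) = -(f x * qf x)
      rw [hfper x, hqanti x]
      ring
  have hIf'q' : ∫ θ in (0:ℝ)..2*π, deriv f θ * deriv qf θ = 0 := by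
    apply integral_antiperiodic_zero (fun θ => deriv f θ * deriv qf θ) ?_ ?_
    · intro x
      show deriv f (x + 2*π) * deriv qf (x + 2*π) = deriv f x * deriv qf x
      have e1 : x + 2*π = x + π + π := by ring
      rw [e1, hf'per (x+π), hf'per x, hq'anti (x+π), hq'anti x, neg_neg]
    · intro x
      show deriv f (x + π) * deriv qf (x + π) = -(deriv f x * deriv qf x)
      rw [hf'per x, hq'anti x]
      ring
  -- pointwise decomposition
  have hpt : ∀ θ, p θ = f θ + qf θ + c := by
    intro θ; simp only [hf, hqf]; ring
  have hdpt : ∀ θ, deriv p θ = deriv f θ + deriv qf θ := by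
    intro θ; rw [hdf, hdq]; ring
  -- integral notation
  set IF := ∫ θ in (0:ℝ)..2*π, f θ ^ 2 with hIF
  set IF' := ∫ θ in (0:ℝ)..2*π, deriv f θ ^ 2 with hIF'
  set IQ := ∫ θ in (0:ℝ)..2*π, qf θ ^ 2 with hIQ
  set IQ' := ∫ θ in (0:ℝ)..2*π, deriv qf θ ^ 2 with hIQ'
  -- the big splitting
  have hbig : ∫ θ in (0:ℝ)..2*π, (p θ ^ 2 - deriv p θ ^ 2)
      = (IF - IF') + (IQ - IQ') + 2*π*c^2 := by
    have hsplit : ∀ θ, p θ ^ 2 - deriv p θ ^ 2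
        = (f θ ^ 2 - deriv f θ ^ 2) + (qf θ ^ 2 - deriv qf θ ^ 2)
          + (2*c*f θ + 2*c*qf θ + 2*(f θ*qf θ) + c^2 - 2*(deriv f θ*deriv qf θ)) := by
      intro θ
      rw [hpt θ, hdpt θ]
      ring
    have hint1 : IntervalIntegrable (fun θ => f θ ^ 2 - deriv f θ ^ 2) volume 0 (2*π) :=
      ((hfc.pow 2).sub (hf'c.pow 2)).intervalIntegrable _ _
    have hint2 : IntervalIntegrable (fun θ => qf θ ^ 2 - deriv qf θ ^ 2) volume 0 (2*π) :=
      ((hqc.pow 2).sub (hq'c.pow 2)).intervalIntegrable _ _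
    have hint3 : IntervalIntegrable
        (fun θ => 2*c*f θ + 2*c*qf θ + 2*(f θ*qf θ) + c^2 - 2*(deriv f θ*deriv qf θ))
        volume 0 (2*π) := by
      apply Continuous.intervalIntegrable
      fun_prop
    have e1 : ∫ θ in (0:ℝ)..2*π, (p θ ^ 2 - deriv p θ ^ 2)
        = (∫ θ in (0:ℝ)..2*π, ((f θ ^ 2 - deriv f θ ^ 2) + (qf θ ^ 2 - deriv qf θ ^ 2))) +
          ∫ θ in (0:ℝ)..2*π,
            (2*c*f θ + 2*c*qf θ + 2*(f θ*qf θ) + c^2 - 2*(deriv f θ*deriv qf θ)) := by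
      rw [← intervalIntegral.integral_add (hint1.add hint2) hint3]
      apply intervalIntegral.integral_congr
      intro θ _
      exact hsplit θ
    rw [e1, intervalIntegral.integral_add hint1 hint2,
      intervalIntegral.integral_sub (f := fun x => f x ^ 2) (g := fun x => deriv f x ^ 2) ((hfc.pow 2).intervalIntegrable _ _) ((hf'c.pow 2).intervalIntegrable _ _),
      intervalIntegral.integral_sub (f := fun x => qf x ^ 2) (g := fun x => deriv qf x ^ 2) ((hqc.pow 2).intervalIntegrable _ _) ((hq'c.pow 2).intervalIntegrable _ _)]
    have e2 : ∫ θ in (0:ℝ)..2*π,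
        (2*c*f θ + 2*c*qf θ + 2*(f θ*qf θ) + c^2 - 2*(deriv f θ*deriv qf θ)) = 2*π*c^2 := by
      have i1 : IntervalIntegrable (fun θ => 2*c*f θ) volume 0 (2*π) :=
        (continuous_const.mul hfc).intervalIntegrable _ _
      have i2 : IntervalIntegrable (fun θ => 2*c*qf θ) volume 0 (2*π) :=
        (continuous_const.mul hqc).intervalIntegrable _ _
      have i3 : IntervalIntegrable (fun θ => 2*(f θ*qf θ)) volume 0 (2*π) :=
        (continuous_const.mul (hfc.mul hqc)).intervalIntegrable _ _
      have i4 : IntervalIntegrable (fun _ : ℝ => c^2) volume 0 (2*π) := intervalIntegrable_const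
      have i5 : IntervalIntegrable (fun θ => 2*(deriv f θ*deriv qf θ)) volume 0 (2*π) :=
        (continuous_const.mul (hf'c.mul hq'c)).intervalIntegrable _ _
      rw [intervalIntegral.integral_sub (((i1.add i2).add i3).add i4) i5,
        intervalIntegral.integral_add ((i1.add i2).add i3) i4,
        intervalIntegral.integral_add (i1.add i2) i3,
        intervalIntegral.integral_add i1 i2]
      rw [intervalIntegral.integral_const_mul, intervalIntegral.integral_const_mul,
        intervalIntegral.integral_const_mul, intervalIntegral.integral_const_mul,
        hIf, hIq, hIfq, hIf'q', intervalIntegral.integral_const]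
      simp
    rw [e2]
  -- Wirtinger inequalities
  have W1 : IQ ≤ IQ' := wirtinger_anti qf hqs hqanti
  have W2 : 4 * IF ≤ IF' := wirtinger_pi_periodic f hfs hfper hIf
  have hIFnn : 0 ≤ IF := by
    apply intervalIntegral.integral_nonneg h2π.le
    intro u _
    positivity
  -- At and A identities
  have hAt2 : At = (1/4) * (IQ - IQ') := by
    rw [hAt]
    congr 1
    rw [intervalIntegral.integral_sub (f := fun x => qf x ^ 2) (g := fun x => deriv qf x ^ 2) ((hqc.pow 2).intervalIntegrable _ _)
      ((hq'c.pow 2).intervalIntegrable _ _)]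
  have hAtneg : At ≤ 0 := by rw [hAt2]; linarith
  have habs : |At| = -At := abs_of_nonpos hAtneg
  have hA2 : A = (1/2) * ((IF - IF') + (IQ - IQ') + 2*π*c^2) := by
    rw [hA, hbig]
  have hL2 : L = 2*π*c := by rw [hc]; field_simp
  -- the main identity : L^2 - (4πA + 8π|At|) = 2π(IF' - IF)
  have hkey : L^2 - (4 * π * A + 8 * π * |At|) = 2*π*(IF' - IF) := by
    rw [habs, hA2, hAt2, hL2]
    ring
  constructor
  · have : 0 ≤ 2*π*(IF' - IF) := by
      apply mul_nonneg (by positivity)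
      linarith
    linarith [hkey]
  · constructor
    · -- equality → constant width
      intro heq
      have hIFF' : IF' = IF := by
        have : 2*π*(IF' - IF) = 0 := by linarith [hkey]
        have h2 : IF' - IF = 0 := by
          by_contra hne
          have := mul_ne_zero (by positivity : (2*π : ℝ) ≠ 0) hne
          exact this ‹2*π*(IF' - IF) = 0›
        linarith
      have hIF0 : IF = 0 := by linarith
      have hfzero : ∀ x ∈ Icc (0:ℝ) (2*π), f x = 0 :=
        eq_zero_of_integral_sq_eq_zero f hfc hIF0
      have hzero : ∀ x, f x = 0 := by
        intro x
        have hmem := toIcoMod_mem_Ico Real.two_pi_pos 0 x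
        rw [zero_add] at hmem
        have he : toIcoMod Real.two_pi_pos 0 x = x - toIcoDiv Real.two_pi_pos 0 x • (2*π) := rfl
        have : f (toIcoMod Real.two_pi_pos 0 x) = f x := by
          rw [he]
          exact hf2per.sub_zsmul_eq _
        rw [← this]
        exact hfzero _ ⟨hmem.1, hmem.2.le⟩
      refine ⟨2*c, fun θ => ?_⟩
      have := hzero θ
      simp only [hf] at this
      linarith
    · -- constant width → equality
      rintro ⟨w, hw⟩
      have hfconst : ∀ θ, f θ = w/2 - c := by
        intro θ
        simp only [hf, hw θ]
      have hwc : w/2 - c = 0 := by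
        have : ∫ θ in (0:ℝ)..2*π, f θ = ∫ θ in (0:ℝ)..2*π, (w/2 - c : ℝ) :=
          intervalIntegral.integral_congr (fun θ _ => hfconst θ)
        rw [hIf, intervalIntegral.integral_const, smul_eq_mul] at this
        rcases mul_eq_zero.mp this.symm with h | h
        · exfalso
          have : (2*π - 0 : ℝ) ≠ 0 := by
            norm_num
          exact this h
        · exact h
      have hIF0 : IF = 0 := by
        rw [hIF]
        have : ∀ θ, f θ ^ 2 = 0 := fun θ => by rw [hfconst θ, hwc]; ring
        simp only [this]
        simp
      have hIF'0 : IF' = 0 := by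
        rw [hIF']
        have hfun : f = fun _ => w/2 - c := funext hfconst
        have : ∀ θ, deriv f θ = 0 := by
          intro θ
          rw [hfun]
          exact deriv_const θ _
        simp only [this]
        simp
      have : 2*π*(IF' - IF) = 0 := by rw [hIF0, hIF'0]; ring
      linarith [hkey]

end ImprovedIso
end

section
/- The improved isoperimetric inequality L_M² ≥ 4π A_M + 8π|Ã_{E_{1/2}(M)}| reduces to equality Ã_{E_{1/2}(M)} = 0 exactly when M is centrally symmetric; that is, Ã_{E_{1/2}(M)} = 0 if and only if p(θ) − p(θ+π) is constant (equal to 0 up to translation of origin), i.e. M has a center of symmetry. -/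
open Real MeasureTheory Set AddCircle

noncomputable section

instance fact_two_pi_pos : Fact (0 < 2*π) := ⟨by positivity⟩

lemma coe_surj {T : ℝ} [hT : Fact (0 < T)] (a : ℝ) (z : AddCircle T) :
    ∃ x ∈ Set.Ioc a (a + T), (x : AddCircle T) = z := by
  refine ⟨(AddCircle.equivIoc T a z : ℝ), (AddCircle.equivIoc T a z).2, ?_⟩
  conv_rhs => rw [← (AddCircle.equivIoc T a).symm_apply_apply z]
  rfl

lemma liftIoc_eq_coe {T : ℝ} [hT : Fact (0 < T)] (h : ℝ → ℂ) (H : C(AddCircle T, ℂ))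
    (hH : ∀ x : ℝ, H x = h x) : AddCircle.liftIoc T 0 h = ⇑H := by
  funext z
  obtain ⟨x, hx, rfl⟩ := coe_surj 0 z
  rw [AddCircle.liftIoc_coe_apply hx, hH]

lemma coeff_eq {T : ℝ} [hT : Fact (0 < T)] (h : ℝ → ℂ) (H : C(AddCircle T, ℂ))
    (hH : ∀ x : ℝ, H x = h x) (n : ℤ) :
    fourierCoeff (⇑H) n = fourierCoeffOn (lt_add_of_pos_right 0 hT.out) h n := by
  rw [← liftIoc_eq_coe h H hH]
  exact fourierCoeff_liftIoc_eq h n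

lemma parseval_periodic {T : ℝ} [hT : Fact (0 < T)] (h : ℝ → ℂ) (H : C(AddCircle T, ℂ))
    (hH : ∀ x : ℝ, H x = h x) :
    Summable (fun n : ℤ => ‖fourierCoeff (⇑H) n‖ ^ 2) ∧
    T * ∑' n : ℤ, ‖fourierCoeff (⇑H) n‖ ^ 2 = ∫ x in (0:ℝ)..T, ‖h x‖ ^ 2 := by
  set F : Lp ℂ 2 (@haarAddCircle T hT) := ContinuousMap.toLp 2 haarAddCircle ℂ H with hF
  have hsum : Summable (fun n : ℤ => ‖fourierCoeff (⇑H) n‖ ^ 2) := by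
    have hmem : Memℓp (fun i => fourierBasis.repr F i) 2 := lp.memℓp (fourierBasis.repr F)
    have hs := (memℓp_gen_iff (p := 2) (by norm_num)).1 hmem
    simp only [fourierBasis_repr] at hs
    rw [hF] at hs
    simp only [fourierCoeff_toLp] at hs
    convert hs using 2 with n
    norm_num
  refine ⟨hsum, ?_⟩
  have hpar := tsum_sq_fourierCoeff F
  rw [hF] at hpar
  simp only [fourierCoeff_toLp] at hpar
  have h1 : ∫ t, ‖(ContinuousMap.toLp (p := 2) (μ := haarAddCircle) (𝕜 := ℂ) H) t‖^2 ∂haarAddCircle = ∫ t, ‖H t‖^2 ∂haarAddCircle := by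
    refine integral_congr_ae ?_
    filter_upwards [ContinuousMap.coeFn_toLp (p := 2) haarAddCircle (𝕜 := ℂ) H] with t ht
    rw [ht]
  have h2 := AddCircle.intervalIntegral_preimage T 0 (fun z => ‖H z‖^2)
  rw [volume_eq_smul_haarAddCircle, integral_smul_measure,
    ENNReal.toReal_ofReal hT.out.le] at h2
  rw [hpar, h1]
  rw [smul_eq_mul] at h2
  rw [← h2, zero_add]
  refine intervalIntegral.integral_congr fun x hx => ?_
  simp only [hH]

lemma coeff_deriv (f f' : ℝ → ℂ) (hf : ∀ x, HasDerivAt f (f' x) x)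
    (hf'c : Continuous f') (hper : f (0 + 2*π) = f 0) {n : ℤ} (hn : n ≠ 0) :
    fourierCoeffOn (lt_add_of_pos_right 0 fact_two_pi_pos.out) f' n =
      (Complex.I * n) * fourierCoeffOn (lt_add_of_pos_right 0 fact_two_pi_pos.out) f n := by
  have h := fourierCoeffOn_of_hasDerivAt (lt_add_of_pos_right 0 fact_two_pi_pos.out) hn
      (fun x _ => hf x) (hf'c.intervalIntegrable _ _)
  rw [hper, sub_self, mul_zero, zero_sub] at h
  rw [h]
  have hπ : (π:ℂ) ≠ 0 := Complex.ofReal_ne_zero.mpr pi_ne_zero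
  have hn' : (n:ℂ) ≠ 0 := Int.cast_ne_zero.mpr hn
  have hI := Complex.I_ne_zero
  push_cast
  field_simp
  ring

lemma coeff_zero_eq (h : ℝ → ℂ) :
    fourierCoeffOn (lt_add_of_pos_right 0 fact_two_pi_pos.out) h 0 =
      (1/(2*π):ℂ) * ∫ x in (0:ℝ)..(2*π), h x := by
  rw [fourierCoeffOn_eq_integral]
  norm_num

lemma aux_lift_eq (h : ℝ → ℂ) (hc : Continuous h) (hper : Function.Periodic h (2 * π)) :
    ∃ H : C(AddCircle (2*π), ℂ), ∀ x : ℝ, H x = h x := by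
  refine ⟨⟨hper.lift, ?_⟩, fun x => hper.lift_coe x⟩
  exact continuous_coinduced_dom.mpr hc

lemma wirtinger_equality (g : ℝ → ℝ) (hg : ContDiff ℝ (⊤ : ℕ∞) g)
    (hper : Function.Periodic g (2 * π))
    (hmean : (∫ θ in (0:ℝ)..(2*π), g θ) = 0)
    (hzero : (∫ θ in (0:ℝ)..(2*π), (g θ ^ 2 - deriv g θ ^ 2)) = 0) :
    ∃ a b : ℝ, ∀ θ : ℝ, g θ = a * Real.cos θ + b * Real.sin θ := by
  have hgd : Differentiable ℝ g := hg.differentiable (by simp)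
  have hgc : Continuous g := hg.continuous
  have hg'c : Continuous (deriv g) := hg.continuous_deriv (by simp)
  have hper' : Function.Periodic (deriv g) (2 * π) := by
    intro x
    have h1 : (fun y => g (y + 2*π)) = g := funext fun y => hper y
    calc deriv g (x + 2*π) = deriv (fun y => g (y + 2*π)) x := (deriv_comp_add_const g (2*π) x).symm
    _ = deriv g x := by rw [h1]
  set f : ℝ → ℂ := fun t => (g t : ℂ) with hfdef
  set f' : ℝ → ℂ := fun t => ((deriv g t : ℝ) : ℂ) with hf'def
  have hfd : ∀ x, HasDerivAt f (f' x) x := fun x => ((hgd x).hasDerivAt).ofReal_comp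
  have hfc : Continuous f := Complex.continuous_ofReal.comp hgc
  have hf'c : Continuous f' := Complex.continuous_ofReal.comp hg'c
  have hfper : Function.Periodic f (2*π) := fun x => by
    simp only [hfdef]; exact_mod_cast congrArg Complex.ofReal (hper x)
  have hf'per : Function.Periodic f' (2*π) := fun x => by
    simp only [hf'def]; exact_mod_cast congrArg Complex.ofReal (hper' x)
  obtain ⟨H, hH⟩ := aux_lift_eq f hfc hfper
  obtain ⟨H', hH'⟩ := aux_lift_eq f' hf'c hf'per
  set c : ℤ → ℂ := fun n => fourierCoeff (⇑H) n with hcdef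
  set d : ℤ → ℂ := fun n => fourierCoeff (⇑H') n with hddef
  have hcOn : ∀ n, c n = fourierCoeffOn (lt_add_of_pos_right 0 fact_two_pi_pos.out) f n :=
    fun n => coeff_eq f H hH n
  have hdOn : ∀ n, d n = fourierCoeffOn (lt_add_of_pos_right 0 fact_two_pi_pos.out) f' n :=
    fun n => coeff_eq f' H' hH' n
  have hrel : ∀ n : ℤ, n ≠ 0 → d n = Complex.I * n * c n := by
    intro n hn
    rw [hcOn, hdOn]
    exact coeff_deriv f f' hfd hf'c (hfper 0) hn
  have hc0 : c 0 = 0 := by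
    rw [hcOn, coeff_zero_eq]
    have h1 : (∫ x in (0:ℝ)..(2*π), f x) = ((∫ x in (0:ℝ)..(2*π), g x : ℝ) : ℂ) := by
      simp only [hfdef]; exact intervalIntegral.integral_ofReal
    rw [h1, hmean]
    simp
  have hd0 : d 0 = 0 := by
    rw [hdOn, coeff_zero_eq]
    have h1 : (∫ x in (0:ℝ)..(2*π), f' x) = ((∫ x in (0:ℝ)..(2*π), deriv g x : ℝ) : ℂ) := by
      simp only [hf'def]; exact intervalIntegral.integral_ofReal
    have h2 : (∫ x in (0:ℝ)..(2*π), deriv g x) = g (2*π) - g 0 :=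
      intervalIntegral.integral_deriv_eq_sub (fun x _ => hgd x) (hg'c.intervalIntegrable _ _)
    have h3 : g (2*π) = g 0 := by simpa using hper 0
    rw [h1, h2, h3, sub_self]
    simp
  obtain ⟨hsum_c, hpar_c⟩ := parseval_periodic f H hH
  obtain ⟨hsum_d, hpar_d⟩ := parseval_periodic f' H' hH'
  have hnf : (∫ x in (0:ℝ)..(2*π), ‖f x‖^2) = ∫ x in (0:ℝ)..(2*π), g x^2 := by
    refine intervalIntegral.integral_congr fun x hx => ?_
    simp [hfdef, Complex.norm_real, sq_abs]
  have hnf' : (∫ x in (0:ℝ)..(2*π), ‖f' x‖^2) = ∫ x in (0:ℝ)..(2*π), (deriv g x)^2 := by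
    refine intervalIntegral.integral_congr fun x hx => ?_
    simp [hf'def, Complex.norm_real, sq_abs]
  have hint : (∫ x in (0:ℝ)..(2*π), g x^2) = ∫ x in (0:ℝ)..(2*π), (deriv g x)^2 := by
    have h1 : IntervalIntegrable (fun x => g x^2) volume 0 (2*π) :=
      ((hgc.pow 2).intervalIntegrable _ _)
    have h2 : IntervalIntegrable (fun x => (deriv g x)^2) volume 0 (2*π) :=
      ((hg'c.pow 2).intervalIntegrable _ _)
    have h3 := intervalIntegral.integral_sub h1 h2
    rw [hzero] at h3
    linarith [h3.symm]
  have htsum : ∑' n:ℤ, ‖c n‖^2 = ∑' n:ℤ, ‖d n‖^2 := by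
    have h2π : (2*π:ℝ) ≠ 0 := by positivity
    have := hpar_c.trans (hnf.trans (hint.trans (hnf'.symm.trans hpar_d.symm)))
    exact mul_left_cancel₀ h2π this
  have hv : ∀ n:ℤ, ‖d n‖^2 = (n:ℝ)^2 * ‖c n‖^2 := by
    intro n
    by_cases hn : n = 0
    · subst hn; rw [hd0, hc0]; simp
    · rw [hrel n hn]
      rw [norm_mul, norm_mul, Complex.norm_I, one_mul, mul_pow]
      congr 1
      rw [Complex.norm_intCast]
      push_cast
      rw [sq_abs]
  have hsub : Summable (fun n:ℤ => ‖d n‖^2 - ‖c n‖^2) := hsum_d.sub hsum_c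
  have htz : ∑' n:ℤ, (‖d n‖^2 - ‖c n‖^2) = 0 := by
    rw [Summable.tsum_sub hsum_d hsum_c, htsum, sub_self]
  have hnn : ∀ n:ℤ, 0 ≤ ‖d n‖^2 - ‖c n‖^2 := by
    intro n
    rw [hv n]
    by_cases hn : n = 0
    · subst hn; simp [hc0]
    · have h1 : (1:ℝ) ≤ (n:ℝ)^2 := by
        have ha : (1:ℝ) ≤ |(n:ℝ)| := by
          rw [← Int.cast_abs]
          exact_mod_cast Int.one_le_abs hn
        have hb : (1:ℝ) * 1 ≤ |(n:ℝ)| * |(n:ℝ)| := mul_le_mul ha ha (by norm_num) (abs_nonneg _)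
        nlinarith [sq_abs ((n:ℝ))]
      nlinarith [sq_nonneg ‖c n‖]
  have hterm : ∀ n:ℤ, ‖d n‖^2 - ‖c n‖^2 = 0 := by
    intro n
    have hle := Summable.le_tsum hsub n (fun j _ => hnn j)
    rw [htz] at hle
    linarith [hnn n]
  have hcn : ∀ n:ℤ, n ≠ 1 → n ≠ -1 → c n = 0 := by
    intro n h1 hm1
    by_cases hn : n = 0
    · subst hn; exact hc0
    · have h := hterm n
      rw [hv n] at h
      have h4 : (4:ℝ) ≤ (n:ℝ)^2 := by
        have ha : (2:ℝ) ≤ |(n:ℝ)| := by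
          rw [← Int.cast_abs]
          have : 2 ≤ |n| := by rcases abs_cases n with h' | h' <;> omega
          exact_mod_cast this
        have hb : (2:ℝ) * 2 ≤ |(n:ℝ)| * |(n:ℝ)| := mul_le_mul ha ha (by norm_num) (abs_nonneg _)
        nlinarith [sq_abs ((n:ℝ))]
      have h5 : ‖c n‖^2 = 0 := by nlinarith [sq_nonneg ‖c n‖]
      have := pow_eq_zero_iff (n := 2) (by norm_num) |>.mp h5
      exact norm_eq_zero.mp this
  have hsummable : Summable (fun n => fourierCoeff (⇑H) n) := by
    apply summable_of_ne_finset_zero (s := ({-1, 1} : Finset ℤ))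
    intro n hn
    simp only [Finset.mem_insert, Finset.mem_singleton] at hn
    push_neg at hn
    exact hcn n hn.2 hn.1
  refine ⟨(c 1).re + (c (-1)).re, (c (-1)).im - (c 1).im, fun θ => ?_⟩
  have hps := has_pointwise_sum_fourier_series_of_summable hsummable (θ : AddCircle (2*π))
  have hfin : HasSum (fun n => fourierCoeff (⇑H) n • fourier n (θ:AddCircle (2*π)))
      (∑ n ∈ ({-1, 1} : Finset ℤ), fourierCoeff (⇑H) n • fourier n (θ:AddCircle (2*π))) := by
    apply hasSum_sum_of_ne_finset_zero
    intro n hn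
    simp only [Finset.mem_insert, Finset.mem_singleton] at hn
    push_neg at hn
    have hz := hcn n hn.2 hn.1
    simp only [hcdef] at hz
    rw [hz]
    simp
  have heq := (hps.unique hfin)
  rw [hH θ] at heq
  rw [Finset.sum_pair (by norm_num : (-1:ℤ) ≠ 1)] at heq
  have hπ : (π:ℂ) ≠ 0 := Complex.ofReal_ne_zero.mpr pi_ne_zero
  have hexp1 : (fourier 1 (θ:AddCircle (2*π)) : ℂ) = Complex.exp (θ * Complex.I) := by
    rw [fourier_coe_apply]
    congr 1
    push_cast
    field_simp
  have hexpm1 : (fourier (-1) (θ:AddCircle (2*π)) : ℂ) = Complex.exp (-θ * Complex.I) := by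
    rw [fourier_coe_apply]
    congr 1
    push_cast
    field_simp
  rw [hexp1, hexpm1] at heq
  rw [Complex.exp_mul_I, Complex.exp_mul_I] at heq
  have hre := congrArg Complex.re heq
  simp only [hfdef, smul_eq_mul, Complex.add_re, Complex.mul_re, Complex.add_im,
    Complex.ofReal_re, Complex.ofReal_im, Complex.mul_im, Complex.I_re, Complex.I_im,
    Complex.cos_neg, Complex.sin_neg, Complex.neg_re, Complex.neg_im,
    Complex.cos_ofReal_re, Complex.sin_ofReal_re, Complex.cos_ofReal_im,
    Complex.sin_ofReal_im] at hre
  simp only [hcdef]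
  linear_combination hre

/-- The oriented area of the Wigner caustic vanishes iff `M` has a center of
symmetry, i.e. `p(θ) - p(θ+π)` vanishes up to a translation of the origin
(a frequency-one term `c₁cos θ + c₂ sin θ`). -/
theorem wigner_area_zero_iff_centrally_symmetric (p : ℝ → ℝ)
    (hp : ContDiff ℝ (⊤ : ℕ∞) p) (hper : Function.Periodic p (2 * π))
    (hpos : ∀ θ : ℝ, 0 < p θ + deriv (deriv p) θ)
    (q : ℝ → ℝ) (hq : ∀ θ : ℝ, q θ = (p θ - p (θ + π)) / 2)
    (At : ℝ)
    (hAt : At = (1/4) * ∫ θ in (0:ℝ)..(2 * π), (q θ ^ 2 - deriv q θ ^ 2)) :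
    At = 0 ↔ ∃ c₁ c₂ : ℝ, ∀ θ : ℝ, p θ - p (θ + π) = c₁ * cos θ + c₂ * sin θ := by
  have hq' : q = fun θ => (p θ - p (θ + π)) / 2 := funext hq
  have hpshift : ContDiff ℝ (⊤ : ℕ∞) (fun θ : ℝ => p (θ + π)) := hp.comp (contDiff_id.add contDiff_const)
  have hqsm : ContDiff ℝ (⊤ : ℕ∞) q := by
    rw [hq']; exact (hp.sub hpshift).div_const 2
  constructor
  · intro hAt0
    have hintzero : (∫ θ in (0:ℝ)..(2*π), (q θ ^ 2 - deriv q θ ^ 2)) = 0 := by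
      rw [hAt] at hAt0; linarith
    have hqper : Function.Periodic q (2*π) := by
      intro x
      rw [hq x, hq (x + 2*π)]
      have h1 : p (x + 2*π) = p x := hper x
      have h2 : p (x + 2*π + π) = p (x + π) := by
        have := hper (x + π)
        rw [show x + π + 2*π = x + 2*π + π by ring] at this
        exact this
      rw [h1, h2]
    have hpc : Continuous p := hp.continuous
    have hint1 : IntervalIntegrable p volume 0 (2*π) := hpc.intervalIntegrable _ _
    have hint2 : IntervalIntegrable (fun θ => p (θ + π)) volume 0 (2*π) :=
      (hpc.comp (continuous_id.add continuous_const)).intervalIntegrable _ _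
    have e1 : (∫ θ in (0:ℝ)..(2*π), p (θ + π)) = ∫ θ in (0:ℝ)..(2*π), p θ := by
      rw [intervalIntegral.integral_comp_add_right]
      rw [zero_add, show 2*π+π = π + 2*π by ring]
      have := hper.intervalIntegral_add_eq π 0
      rw [this, zero_add]
    have hmean : (∫ θ in (0:ℝ)..(2*π), q θ) = 0 := by
      calc (∫ θ in (0:ℝ)..(2*π), q θ)
          = ∫ θ in (0:ℝ)..(2*π), (p θ - p (θ + π))/2 := by rw [hq']
        _ = (∫ θ in (0:ℝ)..(2*π), (p θ - p (θ + π)))/2 := intervalIntegral.integral_div 2 _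
        _ = ((∫ θ in (0:ℝ)..(2*π), p θ) - ∫ θ in (0:ℝ)..(2*π), p (θ + π))/2 := by
            rw [intervalIntegral.integral_sub hint1 hint2]
        _ = 0 := by rw [e1]; ring
    obtain ⟨a, b, hab⟩ := wirtinger_equality q hqsm hqper hmean hintzero
    refine ⟨2*a, 2*b, fun θ => ?_⟩
    have h1 := hab θ
    have h2 := hq θ
    linear_combination 2 * h1 - 2 * h2
  · rintro ⟨c₁, c₂, hc⟩
    have hqc2 : q = fun θ => (c₁ * Real.cos θ + c₂ * Real.sin θ)/2 := by
      funext θ; rw [hq θ, hc θ]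
    have hdq : ∀ θ : ℝ, deriv q θ = (-(c₁ * Real.sin θ) + c₂ * Real.cos θ)/2 := by
      intro θ
      rw [hqc2]
      have hcos := (Real.hasDerivAt_cos θ).const_mul c₁
      have hsin := (Real.hasDerivAt_sin θ).const_mul c₂
      have hD := (hcos.add hsin).div_const 2
      have hD' : HasDerivAt (fun θ => (c₁ * Real.cos θ + c₂ * Real.sin θ)/2)
          ((-(c₁ * Real.sin θ) + c₂ * Real.cos θ)/2) θ := by
        exact hD.congr_deriv (by ring)
      exact hD'.deriv
    have hzero : (∫ θ in (0:ℝ)..(2*π), (q θ ^ 2 - deriv q θ ^ 2)) = 0 := by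
      have hF : ∀ θ:ℝ, HasDerivAt
          (fun θ => ((c₁^2-c₂^2) * Real.sin (2*θ) - 2*c₁*c₂*Real.cos (2*θ))/8)
          (q θ^2 - deriv q θ^2) θ := by
        intro θ
        have h2θ : HasDerivAt (fun θ:ℝ => 2*θ) 2 θ := by
          simpa using (hasDerivAt_id θ).const_mul 2
        have hs := (Real.hasDerivAt_sin (2*θ)).comp θ h2θ
        have hc' := (Real.hasDerivAt_cos (2*θ)).comp θ h2θ
        have hD := ((hs.const_mul (c₁^2-c₂^2)).sub (hc'.const_mul (2*c₁*c₂))).div_const 8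
        refine hD.congr_deriv ?_
        symm
        rw [hdq θ, hq θ, hc θ, Real.sin_two_mul, Real.cos_two_mul]
        have hh3 := Real.sin_sq_add_cos_sq θ
        linear_combination (-(c₁^2-c₂^2)/4) * hh3
      have hcont : Continuous (fun θ => q θ^2 - deriv q θ^2) :=
        (hqsm.continuous.pow 2).sub ((hqsm.continuous_deriv (by simp)).pow 2)
      rw [intervalIntegral.integral_eq_sub_of_hasDerivAt (fun θ _ => hF θ)
        (hcont.intervalIntegrable _ _)]
      have e1 : Real.sin (2*(2*π)) = 0 := by
        rw [show (2:ℝ)*(2*π) = (4:ℕ)*π by push_cast; ring]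
        exact Real.sin_nat_mul_pi 4
      have e2 : Real.cos (2*(2*π)) = 1 := by
        rw [show (2:ℝ)*(2*π) = (2:ℕ)*(2*π) by push_cast; ring]
        exact Real.cos_nat_mul_two_pi 2
      rw [e1, e2]
      norm_num
    rw [hAt, hzero, mul_zero]
end
end

section
/- (Barbier) Let M be an oval of constant width w. Then the length of M equals π·w. -/
open Real

/-- Barbier's theorem: an oval of constant width `w` has length `πw`. -/
theorem barbier (p : ℝ → ℝ) (hp : ContDiff ℝ (⊤ : ℕ∞) p)
    (hper : Function.Periodic p (2 * π))
    (hpos : ∀ θ : ℝ, 0 < p θ + deriv (deriv p) θ)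
    (w : ℝ) (hw : ∀ θ : ℝ, p θ + p (θ + π) = w) :
    ∫ θ in (0:ℝ)..(2 * π), p θ = π * w := by
  have hc : Continuous p := hp.continuous
  have h1 : (∫ θ in (0:ℝ)..(2 * π), p (θ + π)) = ∫ θ in (0:ℝ)..(2 * π), p θ := by
    rw [intervalIntegral.integral_comp_add_right]
    have := hper.intervalIntegral_add_eq π 0
    simpa [add_comm, zero_add] using this
  have h2 : (∫ θ in (0:ℝ)..(2 * π), (p θ + p (θ + π))) = 2 * (∫ θ in (0:ℝ)..(2 * π), p θ) := by
    have i2 : IntervalIntegrable (fun θ => p (θ + π)) MeasureTheory.volume 0 (2 * π) :=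
      (hc.comp (continuous_add_right π)).intervalIntegrable _ _
    rw [intervalIntegral.integral_add (hc.intervalIntegrable _ _) i2, h1]
    ring
  have h3 : (∫ θ in (0:ℝ)..(2 * π), (p θ + p (θ + π))) = 2 * π * w := by
    simp only [hw]
    simp [mul_comm]
  linarith [h2, h3]
end

section
/- Let M be an oval of constant width w enclosing area A_M. Then A_M = πw²/4 − 2|Ã_{E_{1/2}(M)}|, where Ã_{E_{1/2}(M)} is the oriented area of the Wigner caustic of M. -/
open Real MeasureTheory intervalIntegral Filter Set Topology

lemma wirtinger_dirichlet (q : ℝ → ℝ) (hq : ContDiff ℝ (⊤ : ℕ∞) q)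
    (h0 : q 0 = 0) (hπ : q π = 0) :
    0 ≤ ∫ θ in (0:ℝ)..π, (deriv q θ ^ 2 - q θ ^ 2) := by
  have hqd : Differentiable ℝ q := hq.differentiable (by simp)
  have hqc : Continuous q := hqd.continuous
  have hq'c : Continuous (deriv q) := (contDiff_one_iff_deriv.mp (hq.of_le (by exact_mod_cast le_top))).2
  set f : ℝ → ℝ := fun θ => deriv q θ ^ 2 - q θ ^ 2 with hf
  set g : ℝ → ℝ := fun θ => q θ ^ 2 * (cos θ / sin θ) with hg
  set h : ℝ → ℝ := fun θ => deriv q θ - q θ * (cos θ / sin θ) with hh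
  have hfc : Continuous f := by fun_prop
  -- derivative of g on (0, π)
  have hgd : ∀ θ ∈ Ioo (0:ℝ) π, HasDerivAt g (f θ - h θ ^ 2) θ := by
    intro θ hθ
    have hs : sin θ ≠ 0 := ne_of_gt (sin_pos_of_pos_of_lt_pi hθ.1 hθ.2)
    have h1 : HasDerivAt (fun θ => cos θ / sin θ)
        ((-sin θ * sin θ - cos θ * cos θ) / sin θ ^ 2) θ :=
      (hasDerivAt_cos θ).div (hasDerivAt_sin θ) hs
    have h2 : HasDerivAt (fun θ => q θ ^ 2) (2 * q θ * deriv q θ) θ := by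
      simpa [mul_comm] using ((hqd θ).hasDerivAt.fun_pow 2)
    have := h2.fun_mul h1
    refine this.congr_deriv ?_
    have hs2 : sin θ ^ 2 + cos θ ^ 2 = 1 := sin_sq_add_cos_sq θ
    show _ = (deriv q θ ^ 2 - q θ ^ 2) - (deriv q θ - q θ * (cos θ / sin θ)) ^ 2
    field_simp
    nlinarith [sin_sq_add_cos_sq θ, sq_nonneg (sin θ), sq_nonneg (q θ)]
  -- continuity of h on (0, π)
  have hcot : ContinuousOn (fun θ => cos θ / sin θ) (Ioo 0 π) :=
    continuous_cos.continuousOn.div continuous_sin.continuousOn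
      (fun θ hθ => ne_of_gt (sin_pos_of_pos_of_lt_pi hθ.1 hθ.2))
  have hHc : ContinuousOn h (Ioo 0 π) :=
    hq'c.continuousOn.sub (hqc.continuousOn.mul hcot)
  -- on [ε, π-ε], FTC gives a lower bound
  have key : ∀ ε ∈ Ioo (0:ℝ) (π/2), g (π - ε) - g ε ≤ ∫ θ in ε..(π-ε), f θ := by
    intro ε hε
    have hεπ : ε < π - ε := by
      have := hε.2; linarith
    have hsub : uIcc ε (π - ε) ⊆ Ioo 0 π := by
      rw [uIcc_of_le hεπ.le]
      intro x hx
      constructor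
      · linarith [hx.1, hε.1]
      · have := hx.2; have := hε.1; linarith
    have hih : IntervalIntegrable (fun θ => h θ ^ 2) volume ε (π - ε) :=
      ((hHc.mono hsub).pow 2).intervalIntegrable
    have hif : IntervalIntegrable f volume ε (π - ε) := hfc.intervalIntegrable _ _
    have hftc : ∫ θ in ε..(π-ε), (f θ - h θ ^ 2) = g (π - ε) - g ε := by
      apply intervalIntegral.integral_eq_sub_of_hasDerivAt
      · intro θ hθ
        exact hgd θ (hsub hθ)
      · exact hif.sub hih
    have hsplit : ∫ θ in ε..(π-ε), (f θ - h θ ^ 2)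
        = (∫ θ in ε..(π-ε), f θ) - ∫ θ in ε..(π-ε), h θ ^ 2 :=
      intervalIntegral.integral_sub hif hih
    have hpos2 : 0 ≤ ∫ θ in ε..(π-ε), h θ ^ 2 :=
      intervalIntegral.integral_nonneg hεπ.le (fun x _ => sq_nonneg _)
    linarith [hftc, hsplit, hpos2]
  -- limits as ε → 0⁺
  have hAedge : Ioo (0:ℝ) (π/2) ∈ 𝓝[>] (0:ℝ) :=
    Ioo_mem_nhdsGT_of_mem ⟨le_refl _, by positivity⟩
  -- slope limits
  have hsin1 : Tendsto (fun ε : ℝ => ε / sin ε) (𝓝[>] 0) (𝓝 1) := by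
    have h1 : Tendsto (fun ε : ℝ => sin ε / ε) (𝓝[>] 0) (𝓝 1) := by
      have := hasDerivAt_sin 0
      rw [hasDerivAt_iff_tendsto_slope] at this
      have h2 := this.mono_left (nhdsWithin_mono 0 (fun x hx => ne_of_gt hx))
      simp only [cos_zero] at h2
      refine h2.congr (fun x => ?_)
      simp [slope_def_field, Real.sin_zero]
    have := h1.inv₀ one_ne_zero
    simp only [inv_div, inv_one] at this
    exact this
  have hslope0 : Tendsto (fun ε : ℝ => q ε / ε) (𝓝[>] 0) (𝓝 (deriv q 0)) := by
    have := (hqd 0).hasDerivAt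
    rw [hasDerivAt_iff_tendsto_slope] at this
    have h2 := this.mono_left (nhdsWithin_mono 0 (fun x hx => ne_of_gt hx))
    refine h2.congr (fun x => ?_)
    simp [slope_def_field, h0]
  have hqsin0 : Tendsto (fun ε : ℝ => q ε / sin ε) (𝓝[>] 0) (𝓝 (deriv q 0)) := by
    have := hslope0.mul hsin1
    rw [mul_one] at this
    refine this.congr' ?_
    filter_upwards [self_mem_nhdsWithin] with x hx
    have hx0 : x ≠ 0 := ne_of_gt hx
    field_simp
  have hg0 : Tendsto (fun ε : ℝ => g ε) (𝓝[>] 0) (𝓝 0) := by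
    have h1 : Tendsto (fun ε : ℝ => q ε * cos ε) (𝓝[>] 0) (𝓝 0) := by
      have : Tendsto (fun ε : ℝ => q ε * cos ε) (𝓝[>] 0) (𝓝 (q 0 * cos 0)) :=
        ((hqc.tendsto 0).mul (continuous_cos.tendsto 0)).mono_left nhdsWithin_le_nhds
      simpa [h0] using this
    have := h1.mul hqsin0
    rw [zero_mul] at this
    refine this.congr (fun x => ?_)
    simp only [hg]
    ring
  -- π side
  have hmapπ : Tendsto (fun ε : ℝ => π - ε) (𝓝[>] (0:ℝ)) (𝓝[≠] π) := by
    apply tendsto_nhdsWithin_of_tendsto_nhds_of_eventually_within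
    · have : Tendsto (fun ε : ℝ => π - ε) (𝓝 0) (𝓝 π) := by
        have hc : Continuous (fun ε : ℝ => π - ε) := by continuity
        have := hc.tendsto (0:ℝ)
        simpa using this
      exact this.mono_left nhdsWithin_le_nhds
    · filter_upwards [self_mem_nhdsWithin] with x hx
      simp only [mem_compl_iff, mem_singleton_iff]
      intro hcontra
      have : x = 0 := by linarith [sub_eq_self.mp hcontra]
      exact absurd this (ne_of_gt hx)
  have hslopeπ : Tendsto (fun ε : ℝ => q (π - ε) / ε) (𝓝[>] 0) (𝓝 (-(deriv q π))) := by
    have := (hqd π).hasDerivAt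
    rw [hasDerivAt_iff_tendsto_slope] at this
    have h2 := this.comp hmapπ
    have h3 : Tendsto (fun ε : ℝ => -(q (π - ε) / ε)) (𝓝[>] 0) (𝓝 (deriv q π)) := by
      refine h2.congr (fun x => ?_)
      show slope q π (π - x) = -(q (π - x) / x)
      rw [slope_def_field, hπ, sub_zero, show π - x - π = -x by ring, div_neg]
    have := h3.neg
    simpa using this
  have hqsinπ : Tendsto (fun ε : ℝ => q (π - ε) / sin ε) (𝓝[>] 0) (𝓝 (-(deriv q π))) := by
    have := hslopeπ.mul hsin1
    rw [mul_one] at this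
    refine this.congr' ?_
    filter_upwards [self_mem_nhdsWithin] with x hx
    have hx0 : x ≠ 0 := ne_of_gt hx
    field_simp
  have hgπ : Tendsto (fun ε : ℝ => g (π - ε)) (𝓝[>] 0) (𝓝 0) := by
    have h1 : Tendsto (fun ε : ℝ => q (π - ε) * (-cos ε)) (𝓝[>] 0) (𝓝 0) := by
      have hqπ : Tendsto (fun ε : ℝ => q (π - ε)) (𝓝[>] 0) (𝓝 0) := by
        have := (hqc.tendsto π).comp (hmapπ.mono_right nhdsWithin_le_nhds)
        simpa [Function.comp_def, hπ] using this
      have := hqπ.mul (((continuous_cos.tendsto 0).mono_left nhdsWithin_le_nhds).neg)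
      simpa using this
    have := h1.mul hqsinπ
    rw [zero_mul] at this
    refine this.congr (fun x => ?_)
    simp only [hg, cos_pi_sub, sin_pi_sub]
    ring
  -- integral limit
  have hIf : Tendsto (fun ε : ℝ => ∫ θ in ε..(π-ε), f θ) (𝓝[>] 0)
      (𝓝 (∫ θ in (0:ℝ)..π, f θ)) := by
    have hFc : Continuous (fun x => ∫ θ in (0:ℝ)..x, f θ) :=
      intervalIntegral.continuous_primitive (fun a b => hfc.intervalIntegrable a b) 0
    have h1 : Tendsto (fun ε : ℝ => (∫ θ in (0:ℝ)..(π-ε), f θ) - ∫ θ in (0:ℝ)..ε, f θ)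
        (𝓝[>] 0) (𝓝 (∫ θ in (0:ℝ)..π, f θ)) := by
      have ha : Tendsto (fun ε : ℝ => ∫ θ in (0:ℝ)..(π-ε), f θ) (𝓝[>] 0)
          (𝓝 (∫ θ in (0:ℝ)..π, f θ)) := by
        have := (hFc.tendsto π).comp
          ((hmapπ.mono_right nhdsWithin_le_nhds))
        simpa [Function.comp_def] using this
      have hb : Tendsto (fun ε : ℝ => ∫ θ in (0:ℝ)..ε, f θ) (𝓝[>] 0) (𝓝 0) := by
        have := (hFc.tendsto 0).mono_left (nhdsWithin_le_nhds (s := Ioi (0:ℝ)))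
        simpa using this
      simpa using ha.sub hb
    refine h1.congr (fun ε => ?_)
    exact intervalIntegral.integral_interval_sub_left
      (hfc.intervalIntegrable _ _) (hfc.intervalIntegrable _ _)
  -- conclude
  have hlhs : Tendsto (fun ε : ℝ => g (π - ε) - g ε) (𝓝[>] 0) (𝓝 0) := by
    simpa using hgπ.sub hg0
  have := le_of_tendsto_of_tendsto hlhs hIf ?_
  · exact this
  · filter_upwards [hAedge] with ε hε
    exact key ε hε

lemma wirtinger_antiperiodic (q : ℝ → ℝ) (hq : ContDiff ℝ (⊤ : ℕ∞) q)
    (hanti : ∀ θ : ℝ, q (θ + π) = - q θ) :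
    (∫ θ in (0:ℝ)..(2 * π), (q θ ^ 2 - deriv q θ ^ 2)) ≤ 0 := by
  have hqd : Differentiable ℝ q := hq.differentiable (by simp)
  have hqc : Continuous q := hqd.continuous
  have hq'c : Continuous (deriv q) :=
    (contDiff_one_iff_deriv.mp (hq.of_le (by exact_mod_cast le_top))).2
  -- deriv is also antiperiodic
  have hanti' : ∀ θ : ℝ, deriv q (θ + π) = - deriv q θ := by
    intro θ
    have h1 : (fun θ : ℝ => q (θ + π)) = fun θ => -q θ := funext hanti
    have h2 : deriv (fun θ : ℝ => q (θ + π)) θ = deriv q (θ + π) :=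
      deriv_comp_add_const q π θ
    rw [h1] at h2
    rw [← h2, deriv.fun_neg]
  -- find a zero of q in [0, π]
  have hzero : ∃ a, q a = 0 := by
    have h1 : q π = - q 0 := by simpa using hanti 0
    rcases le_total (q 0) 0 with hc | hc
    · have : (0:ℝ) ∈ Icc (q 0) (q π) := ⟨hc, by rw [h1]; linarith⟩
      have := intermediate_value_Icc (le_of_lt pi_pos) hqc.continuousOn this
      obtain ⟨a, _, ha⟩ := this
      exact ⟨a, ha⟩
    · have : (0:ℝ) ∈ Icc (q π) (q 0) := ⟨by rw [h1]; linarith, hc⟩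
      have := intermediate_value_Icc' (le_of_lt pi_pos) hqc.continuousOn this
      obtain ⟨a, _, ha⟩ := this
      exact ⟨a, ha⟩
  obtain ⟨a, ha⟩ := hzero
  -- shifted function
  set Q : ℝ → ℝ := fun θ => q (θ + a) with hQ
  have hQsm : ContDiff ℝ (⊤ : ℕ∞) Q := hq.comp (contDiff_id.add contDiff_const)
  have hQ' : ∀ θ, deriv Q θ = deriv q (θ + a) := fun θ => deriv_comp_add_const q a θ
  have hQ0 : Q 0 = 0 := by simp [hQ, ha]
  have hQπ : Q π = 0 := by
    have : Q π = q (a + π) := by rw [hQ]; ring_nf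
    rw [this, hanti a, ha, neg_zero]
  set F : ℝ → ℝ := fun θ => q θ ^ 2 - deriv q θ ^ 2 with hF
  have hFc : Continuous F := by fun_prop
  -- F is π-periodic
  have hFper : Function.Periodic F π := by
    intro θ
    simp only [hF]
    rw [hanti θ, hanti' θ]
    ring
  have hFper2 : Function.Periodic F (2 * π) := by
    have := hFper.add_period hFper
    simpa [two_mul] using this
  -- shift invariance
  have hshift : (∫ θ in (0:ℝ)..(2 * π), F θ) = ∫ θ in (0:ℝ)..(2 * π), F (θ + a) := by
    rw [intervalIntegral.integral_comp_add_right (fun θ => F θ) a, zero_add]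
    have h := hFper2.intervalIntegral_add_eq a 0
    rw [show (2:ℝ) * π + a = a + 2 * π by ring, h]
    norm_num
  -- F(θ + a) in terms of Q
  have hFQ : ∀ θ, F (θ + a) = Q θ ^ 2 - deriv Q θ ^ 2 := by
    intro θ
    simp only [hF, hQ']
    rfl
  -- split [0, 2π] into two copies of [0, π]
  have hQFper : Function.Periodic (fun θ => F (θ + a)) π := fun θ => by
    simp only [← add_assoc]
    have := hFper (θ + a)
    simpa [add_right_comm] using this
  have hsplit : (∫ θ in (0:ℝ)..(2 * π), F (θ + a)) = 2 * ∫ θ in (0:ℝ)..π, F (θ + a) := by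
    have h1 : (∫ θ in (0:ℝ)..(2 * π), F (θ + a))
        = (∫ θ in (0:ℝ)..π, F (θ + a)) + ∫ θ in π..(2 * π), F (θ + a) := by
      rw [intervalIntegral.integral_add_adjacent_intervals]
      · exact (hFc.comp (continuous_id.add continuous_const)).intervalIntegrable _ _
      · exact (hFc.comp (continuous_id.add continuous_const)).intervalIntegrable _ _
    have h2 : (∫ θ in π..(2 * π), F (θ + a)) = ∫ θ in (0:ℝ)..π, F (θ + a) := by
      have := hQFper.intervalIntegral_add_eq π 0
      simpa [two_mul] using this
    rw [h1, h2]; ring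
  -- apply the Dirichlet Wirtinger inequality to Q
  have hW := wirtinger_dirichlet Q hQsm hQ0 hQπ
  have hQint : (∫ θ in (0:ℝ)..π, F (θ + a)) ≤ 0 := by
    have heq : (∫ θ in (0:ℝ)..π, F (θ + a)) = ∫ θ in (0:ℝ)..π, (Q θ ^ 2 - deriv Q θ ^ 2) := by
      apply intervalIntegral.integral_congr
      intro θ _
      exact hFQ θ
    have hneg : (∫ θ in (0:ℝ)..π, (Q θ ^ 2 - deriv Q θ ^ 2))
        = - ∫ θ in (0:ℝ)..π, (deriv Q θ ^ 2 - Q θ ^ 2) := by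
      rw [← intervalIntegral.integral_neg]
      apply intervalIntegral.integral_congr
      intro θ _
      ring
    rw [heq, hneg]
    linarith
  calc (∫ θ in (0:ℝ)..(2 * π), F θ) = 2 * ∫ θ in (0:ℝ)..π, F (θ + a) := by
        rw [hshift, hsplit]
    _ ≤ 0 := by linarith

/-- For an oval of constant width `w`: `A_M = πw²/4 - 2|Ã_{E_{1/2}(M)}|`. -/
theorem constant_width_area (p : ℝ → ℝ) (hp : ContDiff ℝ (⊤ : ℕ∞) p)
    (hper : Function.Periodic p (2 * π))
    (hpos : ∀ θ : ℝ, 0 < p θ + deriv (deriv p) θ)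
    (w : ℝ) (hw : ∀ θ : ℝ, p θ + p (θ + π) = w)
    (q : ℝ → ℝ) (hq : ∀ θ : ℝ, q θ = (p θ - p (θ + π)) / 2)
    (A At : ℝ)
    (hA : A = (1/2) * ∫ θ in (0:ℝ)..(2 * π), (p θ ^ 2 - deriv p θ ^ 2))
    (hAt : At = (1/4) * ∫ θ in (0:ℝ)..(2 * π), (q θ ^ 2 - deriv q θ ^ 2)) :
    A = π * w ^ 2 / 4 - 2 * |At| := by
  have hpd : Differentiable ℝ p := hp.differentiable (by simp)
  have hpc : Continuous p := hpd.continuous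
  have hp'c : Continuous (deriv p) :=
    (contDiff_one_iff_deriv.mp (hp.of_le (by exact_mod_cast le_top))).2
  -- q = p - w/2
  have hq2 : ∀ θ, q θ = p θ - w / 2 := by
    intro θ
    have := hw θ
    rw [hq θ]
    linarith
  have hqfun : q = fun θ => p θ - w / 2 := funext hq2
  have hqsm : ContDiff ℝ (⊤ : ℕ∞) q := by
    rw [hqfun]; exact hp.sub contDiff_const
  have hqc : Continuous q := hqsm.continuous
  have hq' : deriv q = deriv p := by
    rw [hqfun]
    funext θ
    exact deriv_sub_const _
  have hq'c : Continuous (deriv q) := by rw [hq']; exact hp'c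
  -- q is antiperiodic
  have hanti : ∀ θ : ℝ, q (θ + π) = - q θ := by
    intro θ
    have := hw θ
    rw [hq2 (θ + π), hq2 θ]
    linarith
  -- ∫ q = 0
  have hqint0 : (∫ θ in (0:ℝ)..(2 * π), q θ) = 0 := by
    have h1 : (∫ θ in (0:ℝ)..(2 * π), q θ)
        = (∫ θ in (0:ℝ)..π, q θ) + ∫ θ in π..(2 * π), q θ := by
      rw [intervalIntegral.integral_add_adjacent_intervals] <;>
        exact hqc.intervalIntegrable _ _
    have h2 : (∫ θ in π..(2 * π), q θ) = ∫ θ in (0:ℝ)..π, q (θ + π) := by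
      rw [intervalIntegral.integral_comp_add_right (fun θ => q θ) π, zero_add]
      norm_num [two_mul]
    have h3 : (∫ θ in (0:ℝ)..π, q (θ + π)) = - ∫ θ in (0:ℝ)..π, q θ := by
      rw [← intervalIntegral.integral_neg]
      exact intervalIntegral.integral_congr (fun θ _ => hanti θ)
    rw [h1, h2, h3]; ring
  -- the pointwise algebraic identity
  have hpoint : ∀ θ, p θ ^ 2 - deriv p θ ^ 2
      = (q θ ^ 2 - deriv q θ ^ 2) + w * q θ + w ^ 2 / 4 := by
    intro θ
    rw [hq2 θ, hq']
    ring
  -- integral identity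
  have hint1 : (∫ θ in (0:ℝ)..(2 * π), (p θ ^ 2 - deriv p θ ^ 2))
      = (∫ θ in (0:ℝ)..(2 * π), (q θ ^ 2 - deriv q θ ^ 2)) + π * w ^ 2 / 2 := by
    have hiq : IntervalIntegrable (fun θ => q θ ^ 2 - deriv q θ ^ 2) MeasureTheory.volume
        0 (2 * π) := by
      apply Continuous.intervalIntegrable
      fun_prop
    have hiw : IntervalIntegrable (fun θ => w * q θ) MeasureTheory.volume 0 (2 * π) :=
      (continuous_const.mul hqc).intervalIntegrable _ _
    have hic : IntervalIntegrable (fun _ : ℝ => w ^ 2 / 4) MeasureTheory.volume 0 (2 * π) :=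
      continuous_const.intervalIntegrable _ _
    calc (∫ θ in (0:ℝ)..(2 * π), (p θ ^ 2 - deriv p θ ^ 2))
        = ∫ θ in (0:ℝ)..(2 * π),
            ((q θ ^ 2 - deriv q θ ^ 2) + w * q θ + w ^ 2 / 4) :=
          intervalIntegral.integral_congr (fun θ _ => hpoint θ)
      _ = (∫ θ in (0:ℝ)..(2 * π), ((q θ ^ 2 - deriv q θ ^ 2) + w * q θ))
            + ∫ θ in (0:ℝ)..(2 * π), (w ^ 2 / 4 : ℝ) := by
          rw [← intervalIntegral.integral_add (hiq.add hiw) hic]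
      _ = (∫ θ in (0:ℝ)..(2 * π), (q θ ^ 2 - deriv q θ ^ 2))
            + w * (∫ θ in (0:ℝ)..(2 * π), q θ)
            + ∫ θ in (0:ℝ)..(2 * π), (w ^ 2 / 4 : ℝ) := by
          rw [intervalIntegral.integral_add hiq hiw,
            intervalIntegral.integral_const_mul]
      _ = (∫ θ in (0:ℝ)..(2 * π), (q θ ^ 2 - deriv q θ ^ 2)) + π * w ^ 2 / 2 := by
          rw [hqint0, intervalIntegral.integral_const]
          simp
          ring
  -- Wirtinger: the q-integral is nonpositive
  have hWir := wirtinger_antiperiodic q hqsm hanti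
  have hAt_nonpos : At ≤ 0 := by
    rw [hAt]
    nlinarith
  have habs : |At| = -At := abs_of_nonpos hAt_nonpos
  rw [habs, hA, hint1, hAt]
  ring
end

section
/- (Stability, L²-distance) Let K be a strictly convex body with boundary support function p, perimeter L, area A, and oriented Wigner caustic area Ã, and let W_K have support function p_W(θ) = L/(2π) + (p(θ)−p(θ+π))/2. Then L² − 4πA − 8π|Ã| ≥ 6π·d₂(K, W_K)², where d₂(K, W_K)² = ∫₀^{2π} |p(θ) − p_W(θ)|² dθ. Equality holds if and only if the even-index Fourier coefficients of p vanish for all even n ≥ 4 (i.e., ∂K has constant width or p differs from an odd-frequency function only by frequency-2 terms). -/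
open Real MeasureTheory intervalIntegral Set AddCircle

noncomputable def fc (f : ℝ → ℝ) (k : ℤ) : ℂ :=
  (1/(2*π) : ℂ) * ∫ x in (0:ℝ)..(2*π), Complex.exp (-(Complex.I * k * x)) * f x

lemma exp_neg_I_per (k : ℤ) (x : ℝ) :
    Complex.exp (-(Complex.I * k * ((x + 2*π : ℝ)))) = Complex.exp (-(Complex.I * k * x)) := by
  have h : -(Complex.I * k * (((x + 2*π : ℝ)) : ℂ)) = -(Complex.I * k * x) + (-k : ℤ) * (2*π*Complex.I) := by
    push_cast; ring
  rw [h, Complex.exp_add, Complex.exp_int_mul_two_pi_mul_I, mul_one]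

lemma cont_exp_neg (k : ℤ) : Continuous fun x : ℝ => Complex.exp (-(Complex.I * k * x)) := by
  fun_prop

lemma integral_exp_I (j : ℤ) :
    (∫ x in (0:ℝ)..(2*π), Complex.exp (Complex.I * j * x)) = if j = 0 then (2*π:ℂ) else 0 := by
  rcases eq_or_ne j 0 with h | h
  · simp [h]
  · have hc : (Complex.I * j) ≠ 0 := by
      simp only [mul_ne_zero_iff]
      exact ⟨Complex.I_ne_zero, by exact_mod_cast h⟩
    have key : (∫ x in (0:ℝ)..(2*π), Complex.exp (Complex.I * j * x)) =
        (Complex.exp (Complex.I * j * (2*π:ℝ)) - Complex.exp (Complex.I * j * (0:ℝ))) / (Complex.I * j) := by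
      have := integral_exp_mul_complex (a := 0) (b := 2*π) hc
      simpa [mul_assoc] using this
    have h2 : Complex.exp (Complex.I * j * (2*π:ℝ)) = 1 := by
      rw [show Complex.I * (j:ℂ) * ((2*π:ℝ):ℂ) = (j:ℤ) * (2*π*Complex.I) by push_cast; ring]
      exact Complex.exp_int_mul_two_pi_mul_I j
    rw [key, h2, if_neg h]
    simp

lemma integral_antiperiodic_eq_zero {g : ℝ → ℝ} (hg : Continuous g)
    (h : ∀ x, g (x + π) = - g x) : (∫ x in (0:ℝ)..(2*π), g x) = 0 := by
  have h1 : (∫ x in (0:ℝ)..(2*π), g x)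
      = (∫ x in (0:ℝ)..π, g x) + ∫ x in π..(2*π), g x := by
    rw [integral_add_adjacent_intervals] <;> exact (hg.intervalIntegrable _ _)
  have h2 : (∫ x in π..(2*π), g x) = ∫ x in (0:ℝ)..π, g (x + π) := by
    rw [integral_comp_add_right]
    norm_num
    ring_nf
  have h3 : (∫ x in (0:ℝ)..π, g (x + π)) = - ∫ x in (0:ℝ)..π, g x := by
    simp only [h]
    exact intervalIntegral.integral_neg
  rw [h1, h2, h3]; ring

lemma fc_deriv {f : ℝ → ℝ} (hf : ContDiff ℝ (⊤ : ℕ∞) f) (hper : Function.Periodic f (2*π)) (k : ℤ) :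
    fc (deriv f) k = Complex.I * k * fc f k := by
  have hdiff : Differentiable ℝ f := hf.differentiable (by simp)
  have hdc : Continuous (deriv f) := (contDiff_infty_iff_deriv.mp (hf.of_le (by simp))).2.continuous
  have key : (∫ x in (0:ℝ)..(2*π),
      (Complex.exp (-(Complex.I * k * x)) * ((deriv f x : ℝ) : ℂ)
        + (-(Complex.I * k)) * (Complex.exp (-(Complex.I * k * x)) * (f x : ℂ))))
      = Complex.exp (-(Complex.I * k * (2*π:ℝ))) * (f (2*π) : ℂ)
        - Complex.exp (-(Complex.I * k * (0:ℝ))) * (f 0 : ℂ) := by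
    apply integral_eq_sub_of_hasDerivAt (f := fun y : ℝ => Complex.exp (-(Complex.I * k * y)) * ((f y : ℝ) : ℂ))
    · intro x _
      have h1 : HasDerivAt (fun y : ℝ => Complex.exp (-(Complex.I * k * y)))
          ((-(Complex.I * k)) * Complex.exp (-(Complex.I * k * x))) x := by
        have hlin : HasDerivAt (fun y : ℝ => -(Complex.I * (k:ℂ) * (y:ℂ))) (-(Complex.I*(k:ℂ))) x := by
          exact (by simpa using ((Complex.ofRealCLM.hasDerivAt (x := x)).const_mul (Complex.I * (k:ℂ))) :
            HasDerivAt (fun y : ℝ => Complex.I * (k:ℂ) * (y:ℂ)) (Complex.I*(k:ℂ)) x).neg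
        simpa [mul_comm] using hlin.cexp
      have h2 : HasDerivAt (fun y : ℝ => (f y : ℂ)) (((deriv f x : ℝ) : ℂ)) x :=
        ((hdiff x).hasDerivAt).ofReal_comp
      have := h1.fun_mul h2
      convert this using 1
      · rfl
      ring
    · apply ContinuousOn.intervalIntegrable
      apply Continuous.continuousOn
      exact ((cont_exp_neg k).mul (Complex.continuous_ofReal.comp hdc)).add
        (continuous_const.mul ((cont_exp_neg k).mul (Complex.continuous_ofReal.comp hf.continuous)))
  have hzero : Complex.exp (-(Complex.I * k * (2*π:ℝ))) * (f (2*π) : ℂ)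
      - Complex.exp (-(Complex.I * k * (0:ℝ))) * (f 0 : ℂ) = 0 := by
    have hf2 : f (2*π) = f 0 := by simpa using (hper 0)
    have he : Complex.exp (-(Complex.I * k * (2*π:ℝ))) = 1 := by
      rw [show -(Complex.I * (k:ℂ) * ((2*π:ℝ):ℂ)) = (-k : ℤ) * (2*π*Complex.I) by push_cast; ring]
      exact Complex.exp_int_mul_two_pi_mul_I _
    rw [hf2, he]; simp
  have h0 := key.trans hzero
  have hsplit : (∫ x in (0:ℝ)..(2*π),
      (Complex.exp (-(Complex.I * k * x)) * ((deriv f x : ℝ) : ℂ)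
        + (-(Complex.I * k)) * (Complex.exp (-(Complex.I * k * x)) * (f x : ℂ))))
      = (∫ x in (0:ℝ)..(2*π), Complex.exp (-(Complex.I * k * x)) * ((deriv f x : ℝ) : ℂ))
        + (-(Complex.I * k)) * ∫ x in (0:ℝ)..(2*π), Complex.exp (-(Complex.I * k * x)) * (f x : ℂ) := by
    rw [intervalIntegral.integral_add ?_ ?_, intervalIntegral.integral_const_mul]
    · exact (((cont_exp_neg k).mul (Complex.continuous_ofReal.comp hdc))).intervalIntegrable _ _
    · exact (continuous_const.mul ((cont_exp_neg k).mul
        (Complex.continuous_ofReal.comp hf.continuous))).intervalIntegrable _ _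
  have h1 := hsplit.symm.trans h0
  have : (∫ x in (0:ℝ)..(2*π), Complex.exp (-(Complex.I * k * x)) * ((deriv f x : ℝ) : ℂ))
      = (Complex.I * k) * ∫ x in (0:ℝ)..(2*π), Complex.exp (-(Complex.I * k * x)) * (f x : ℂ) := by
    linear_combination h1
  rw [fc, fc, this]; ring

lemma fc_shift {f : ℝ → ℝ} (hc : Continuous f) (hper : Function.Periodic f (2*π)) (k : ℤ) :
    fc (fun x => f (x + π)) k = (-1:ℂ)^k * fc f k := by
  have hepi : Complex.exp (Complex.I * k * (π:ℝ)) = (-1:ℂ)^k := by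
    rw [show Complex.I * (k:ℂ) * ((π:ℝ):ℂ) = (k:ℤ) * ((π:ℝ) * Complex.I) by push_cast; ring,
      Complex.exp_int_mul, Complex.exp_pi_mul_I]
  have hpt : ∀ x : ℝ, Complex.exp (-(Complex.I * k * x)) * (f (x + π) : ℂ)
      = Complex.exp (Complex.I * k * (π:ℝ)) *
        (Complex.exp (-(Complex.I * k * ((x + π : ℝ)))) * (f (x + π) : ℂ)) := by
    intro x
    rw [← mul_assoc, ← Complex.exp_add]
    congr 2
    push_cast; ring
  have h1 : (∫ x in (0:ℝ)..(2*π), Complex.exp (-(Complex.I * k * x)) * (f (x + π) : ℂ))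
      = Complex.exp (Complex.I * k * (π:ℝ)) *
        ∫ x in (0:ℝ)..(2*π), Complex.exp (-(Complex.I * k * ((x + π:ℝ)))) * (f (x + π) : ℂ) := by
    rw [← intervalIntegral.integral_const_mul]
    exact intervalIntegral.integral_congr (fun x _ => hpt x)
  have hg : Function.Periodic (fun x : ℝ => Complex.exp (-(Complex.I * k * x)) * (f x : ℂ)) (2*π) := by
    intro x
    simp only [exp_neg_I_per, hper x]
  have h2 : (∫ x in (0:ℝ)..(2*π), Complex.exp (-(Complex.I * k * ((x + π:ℝ)))) * (f (x + π) : ℂ))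
      = ∫ x in (0:ℝ)..(2*π), Complex.exp (-(Complex.I * k * x)) * (f x : ℂ) := by
    have h3 := intervalIntegral.integral_comp_add_right (a := (0:ℝ)) (b := 2*π)
      (fun x : ℝ => Complex.exp (-(Complex.I * k * x)) * (f x : ℂ)) π
    rw [h3]
    have h4 := hg.intervalIntegral_add_eq (t := π) (s := 0)
    simp only [zero_add] at h4
    rw [show (0:ℝ) + π = π by ring, show (2*π + π : ℝ) = π + 2*π by ring] at *
    exact h4
  rw [fc, fc, h1, h2, hepi]
  ring

lemma fc_sub {f g : ℝ → ℝ} (hf : Continuous f) (hg : Continuous g) (k : ℤ) :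
    fc (fun x => f x - g x) k = fc f k - fc g k := by
  rw [fc, fc, fc, ← mul_sub, ← intervalIntegral.integral_sub]
  · congr 1
    apply intervalIntegral.integral_congr
    intro x _
    push_cast
    ring
  · exact ((cont_exp_neg k).mul (Complex.continuous_ofReal.comp hf)).intervalIntegrable _ _
  · exact ((cont_exp_neg k).mul (Complex.continuous_ofReal.comp hg)).intervalIntegrable _ _

lemma fc_div_two {f : ℝ → ℝ} (k : ℤ) :
    fc (fun x => f x / 2) k = fc f k / 2 := by
  rw [fc, fc]
  rw [show (∫ x in (0:ℝ)..(2*π), Complex.exp (-(Complex.I * k * x)) * ((f x / 2 : ℝ):ℂ))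
      = ∫ x in (0:ℝ)..(2*π), (Complex.exp (-(Complex.I * k * x)) * (f x : ℂ)) / 2 from
    intervalIntegral.integral_congr (fun x _ => by push_cast; ring)]
  rw [intervalIntegral.integral_div]
  ring

lemma fc_const (c : ℝ) (k : ℤ) (hk : k ≠ 0) : fc (fun _ => c) k = 0 := by
  have h : (∫ x in (0:ℝ)..(2*π), Complex.exp (-(Complex.I * k * x)) * (c:ℂ))
      = (c:ℂ) * ∫ x in (0:ℝ)..(2*π), Complex.exp (Complex.I * ((-k : ℤ) : ℂ) * x) := by
    rw [← intervalIntegral.integral_const_mul]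
    apply intervalIntegral.integral_congr
    intro x _
    show Complex.exp (-(Complex.I * k * x)) * (c:ℂ) = (c:ℂ) * Complex.exp (Complex.I * ((-k : ℤ):ℂ) * x)
    rw [show Complex.I * ((-k : ℤ):ℂ) * (x:ℝ) = -(Complex.I * (k:ℂ) * (x:ℝ)) by push_cast; ring]
    ring
  rw [fc, h, integral_exp_I (-k), if_neg (by omega : ¬ -k = 0)]
  ring

lemma fc_zero {f : ℝ → ℝ} : fc f 0 = (1/(2*π) : ℂ) * ((∫ x in (0:ℝ)..(2*π), f x : ℝ) : ℂ) := by
  rw [fc]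
  congr 1
  rw [← intervalIntegral.integral_ofReal]
  apply intervalIntegral.integral_congr
  intro x _
  simp

lemma parseval {f : ℝ → ℝ} (hc : Continuous f) (hper : Function.Periodic f (2*π)) :
    Summable (fun k : ℤ => ‖fc f k‖^2) ∧
      (∫ x in (0:ℝ)..(2*π), (f x)^2) = 2*π*∑' k : ℤ, ‖fc f k‖^2 := by
  haveI : Fact (0 < 2*π) := ⟨two_pi_pos⟩
  set fC : ℝ → ℂ := fun x => (f x : ℂ) with hfC
  have hcC : Continuous fC := Complex.continuous_ofReal.comp hc
  have hends : fC 0 = fC (0 + 2*π) := by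
    simp only [hfC]
    exact_mod_cast congrArg (fun r : ℝ => (r:ℂ)) (hper 0).symm
  have hlift : Continuous (AddCircle.liftIco (2*π) 0 fC) :=
    AddCircle.liftIco_continuous hends hcC.continuousOn
  set G : C(AddCircle (2*π), ℂ) := ⟨_, hlift⟩ with hGdef
  have hGcoe : ∀ x : ℝ, x ∈ Ico (0:ℝ) (2*π) → G (x : AddCircle (2*π)) = fC x := by
    intro x hx
    exact AddCircle.liftIco_coe_apply (p := 2*π) (a := 0) (f := fC) (x := x) (by rwa [zero_add])
  have hne : ∀ᵐ x : ℝ, x ≠ 2*π := by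
    have hs : {x : ℝ | ¬ x ≠ 2*π} = {2*π} := by ext; simp
    rw [MeasureTheory.ae_iff, hs]
    exact measure_singleton _
  -- Claim A
  have claimA : ∀ k : ℤ, fourierCoeff (G : AddCircle (2*π) → ℂ) k = fc f k := by
    intro k
    rw [fourierCoeff_eq_intervalIntegral _ k 0]
    have hint : (∫ x in (0:ℝ)..(0+2*π), fourier (-k) (x : AddCircle (2*π)) • G (x : AddCircle (2*π)))
        = ∫ x in (0:ℝ)..(2*π), Complex.exp (-(Complex.I*k*x)) * fC x := by
      rw [show (0:ℝ)+2*π = 2*π by ring]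
      apply intervalIntegral.integral_congr_ae
      filter_upwards [hne] with x hx hmem
      have hx' : x ∈ Ico (0:ℝ) (2*π) := by
        rw [uIoc_of_le (by positivity)] at hmem
        exact ⟨hmem.1.le, lt_of_le_of_ne hmem.2 hx⟩
      rw [hGcoe x hx', fourier_coe_apply, smul_eq_mul]
      have hpi : ((2*π:ℝ) : ℂ) ≠ 0 := by
        exact_mod_cast (ne_of_gt two_pi_pos)
      congr 2
      rw [div_eq_iff hpi]
      push_cast
      ring
    rw [hint, fc]
    rw [Complex.real_smul]
    push_cast
    ring
  -- the Lp element
  set FL := ContinuousMap.toLp (E := ℂ) 2 haarAddCircle ℂ G with hFL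
  have hcoeff : ∀ k : ℤ, fourierCoeff (FL : AddCircle (2*π) → ℂ) k = fc f k := by
    intro k
    rw [hFL, fourierCoeff_toLp, claimA]
  -- summability
  have hsummable : Summable (fun k : ℤ => ‖fc f k‖^2) := by
    have hmem := lp.memℓp (fourierBasis.repr FL)
    have h2 : (0:ℝ) < (2 : ENNReal).toReal := by norm_num
    have := (memℓp_gen_iff h2).mp hmem
    have heq : ∀ k : ℤ, ‖fourierBasis.repr FL k‖ ^ (2:ENNReal).toReal = ‖fc f k‖^2 := by
      intro k
      rw [fourierBasis_repr, hcoeff]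
      norm_num
    exact this.congr heq
  refine ⟨hsummable, ?_⟩
  -- Parseval value
  have hpars := tsum_sq_fourierCoeff FL
  simp_rw [hcoeff] at hpars
  -- RHS: ∫ over haar of ‖FL t‖^2 = (1/(2π)) * ∫ x in 0..2π, f x ^2
  have hae2 : (∫ t : AddCircle (2*π), ‖FL t‖^2 ∂haarAddCircle)
      = ∫ t : AddCircle (2*π), ‖G t‖^2 ∂haarAddCircle := by
    apply MeasureTheory.integral_congr_ae
    filter_upwards [ContinuousMap.coeFn_toLp (𝕜 := ℂ) (p := 2) haarAddCircle G] with t ht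
    rw [ht]
  have hvol : (∫ t : AddCircle (2*π), ‖G t‖^2 ∂(volume : Measure (AddCircle (2*π))))
      = (2*π) * ∫ t : AddCircle (2*π), ‖G t‖^2 ∂haarAddCircle := by
    rw [volume_eq_smul_haarAddCircle, MeasureTheory.integral_smul_measure]
    rw [ENNReal.toReal_ofReal two_pi_pos.le, smul_eq_mul]
  have hpre := AddCircle.intervalIntegral_preimage (2*π) 0 (fun t : AddCircle (2*π) => ‖G t‖^2)
  have hival : (∫ x in (0:ℝ)..(2*π), ‖G (x : AddCircle (2*π))‖^2)
      = ∫ x in (0:ℝ)..(2*π), (f x)^2 := by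
    apply intervalIntegral.integral_congr_ae
    filter_upwards [hne] with x hx hmem
    have hx' : x ∈ Ico (0:ℝ) (2*π) := by
      rw [uIoc_of_le (by positivity)] at hmem
      exact ⟨hmem.1.le, lt_of_le_of_ne hmem.2 hx⟩
    rw [hGcoe x hx']
    simp only [hfC, Complex.norm_real, Real.norm_eq_abs, sq_abs]
  rw [show (0:ℝ)+2*π = 2*π by ring] at hpre
  have hfin : (∫ x in (0:ℝ)..(2*π), (f x)^2) = (2*π) * ∫ t : AddCircle (2*π), ‖G t‖^2 ∂haarAddCircle :=
    hival.symm.trans (hpre.trans hvol)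
  rw [hfin, ← hae2, hpars]

lemma periodic_deriv' {f : ℝ → ℝ} (hper : Function.Periodic f (2*π)) :
    Function.Periodic (deriv f) (2*π) := by
  intro x
  have h : (fun y : ℝ => f (y + 2*π)) = f := funext hper
  calc deriv f (x + 2*π) = deriv (fun y : ℝ => f (y + 2*π)) x := (deriv_comp_add_const f (2*π) x).symm
  _ = deriv f x := by rw [h]

lemma natAbs_sq_real (k : ℤ) : ((k.natAbs : ℝ))^2 = (k:ℝ)^2 := by
  rw [Nat.cast_natAbs, Int.cast_abs, sq_abs]

lemma wirt {f : ℝ → ℝ} (hf : ContDiff ℝ (⊤ : ℕ∞) f) (hper : Function.Periodic f (2*π)) (m : ℕ)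
    (hm : ∀ k : ℤ, k.natAbs < m → fc f k = 0) :
    ((∫ x in (0:ℝ)..(2*π), (deriv f x)^2) - (m:ℝ)^2 * (∫ x in (0:ℝ)..(2*π), (f x)^2)
      = 2*π*∑' k : ℤ, (((k:ℝ)^2 - (m:ℝ)^2) * ‖fc f k‖^2)) ∧
    (0 ≤ ∑' k : ℤ, (((k:ℝ)^2 - (m:ℝ)^2) * ‖fc f k‖^2)) ∧
    ((∑' k : ℤ, (((k:ℝ)^2 - (m:ℝ)^2) * ‖fc f k‖^2)) = 0 ↔
      ∀ k : ℤ, m < k.natAbs → fc f k = 0) := by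
  obtain ⟨S1, V1⟩ := parseval hf.continuous hper
  have hdc : Continuous (deriv f) := (contDiff_infty_iff_deriv.mp (hf.of_le (by simp))).2.continuous
  obtain ⟨S2, V2⟩ := parseval hdc (periodic_deriv' hper)
  have hfc : ∀ k : ℤ, ‖fc (deriv f) k‖^2 = (k:ℝ)^2 * ‖fc f k‖^2 := by
    intro k
    rw [fc_deriv hf hper k]
    simp only [norm_mul, Complex.norm_I, one_mul, Complex.norm_intCast]
    rw [mul_pow, sq_abs]
  have S2' : Summable (fun k : ℤ => (k:ℝ)^2 * ‖fc f k‖^2) := S2.congr hfc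
  have Ssig : Summable (fun k : ℤ => ((k:ℝ)^2 - (m:ℝ)^2) * ‖fc f k‖^2) := by
    have := S2'.sub (S1.mul_left ((m:ℝ)^2))
    exact this.congr (fun k => by ring)
  have hterm_nonneg : ∀ k : ℤ, 0 ≤ ((k:ℝ)^2 - (m:ℝ)^2) * ‖fc f k‖^2 := by
    intro k
    rcases lt_or_ge k.natAbs m with h | h
    · rw [hm k h]
      simp
    · have h1 : (m:ℝ) ≤ (k.natAbs : ℝ) := by exact_mod_cast h
      have h2 : (m:ℝ)^2 ≤ (k:ℝ)^2 := by
        rw [← natAbs_sq_real k]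
        exact pow_le_pow_left₀ (by positivity) h1 2
      have : 0 ≤ ‖fc f k‖^2 := by positivity
      nlinarith
  refine ⟨?_, tsum_nonneg hterm_nonneg, ?_⟩
  · have htsub : (∑' k : ℤ, (((k:ℝ)^2 - (m:ℝ)^2) * ‖fc f k‖^2))
        = (∑' k : ℤ, (k:ℝ)^2 * ‖fc f k‖^2) - (m:ℝ)^2 * ∑' k : ℤ, ‖fc f k‖^2 := by
      rw [← tsum_mul_left, ← Summable.tsum_sub S2' (S1.mul_left ((m:ℝ)^2))]
      exact tsum_congr (fun k => by ring)
    have V2' : (∫ x in (0:ℝ)..(2*π), (deriv f x)^2) = 2*π*∑' k : ℤ, (k:ℝ)^2 * ‖fc f k‖^2 := by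
      rw [V2]
      congr 1
      exact tsum_congr hfc
    rw [V1, V2', htsub]
    ring
  · constructor
    · intro h0 k hk
      have hle := Summable.le_tsum Ssig k (fun j _ => hterm_nonneg j)
      rw [h0] at hle
      have hz : ((k:ℝ)^2 - (m:ℝ)^2) * ‖fc f k‖^2 = 0 := le_antisymm hle (hterm_nonneg k)
      have h1 : (m:ℝ) < (k.natAbs : ℝ) := by exact_mod_cast hk
      have h2 : (m:ℝ)^2 < (k:ℝ)^2 := by
        rw [← natAbs_sq_real k]
        apply pow_lt_pow_left₀ h1 (by positivity)
        norm_num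
      have h3 : ‖fc f k‖^2 = 0 := by
        rcases mul_eq_zero.mp hz with h | h
        · nlinarith
        · exact h
      have := pow_eq_zero_iff (n := 2) (by norm_num) |>.mp h3
      exact norm_eq_zero.mp this
    · intro hall
      have : ∀ k : ℤ, ((k:ℝ)^2 - (m:ℝ)^2) * ‖fc f k‖^2 = 0 := by
        intro k
        rcases lt_trichotomy k.natAbs m with h | h | h
        · rw [hm k h]; simp
        · have : ((k:ℝ)^2 - (m:ℝ)^2) = 0 := by
            rw [← natAbs_sq_real k, h]; ring
          rw [this]; ring
        · rw [hall k h]; simp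
      rw [tsum_congr this, tsum_zero]

lemma norm_exp_neg (k : ℤ) (x : ℝ) : ‖Complex.exp (-(Complex.I * k * x))‖ = 1 := by
  rw [Complex.norm_exp]
  simp

lemma exp_trig_pt (k : ℤ) (m : ℕ) (A B x : ℝ) :
    Complex.exp (-(Complex.I*k*x)) * ((A * Real.cos (m*x) + B * Real.sin (m*x) : ℝ) : ℂ)
      = ((A:ℂ) - Complex.I*B)/2 * Complex.exp (Complex.I*(((m:ℤ) - k : ℤ):ℂ)*x)
        + ((A:ℂ) + Complex.I*B)/2 * Complex.exp (Complex.I*((-(m:ℤ) - k : ℤ):ℂ)*x) := by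
  have h1 : Complex.exp (Complex.I*(((m:ℤ) - k : ℤ):ℂ)*x)
      = Complex.exp (((m:ℝ)*x : ℝ) * Complex.I) * Complex.exp (-(Complex.I*k*x)) := by
    rw [← Complex.exp_add]; congr 1; push_cast; ring
  have h2 : Complex.exp (Complex.I*((-(m:ℤ) - k : ℤ):ℂ)*x)
      = Complex.exp ((-((m:ℝ)*x) : ℝ) * Complex.I) * Complex.exp (-(Complex.I*k*x)) := by
    rw [← Complex.exp_add]; congr 1; push_cast; ring
  rw [h1, h2, Complex.exp_mul_I, Complex.exp_mul_I]
  push_cast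
  rw [Complex.cos_neg, Complex.sin_neg]
  linear_combination (Complex.exp (-(Complex.I*(k:ℂ)*(x:ℂ))) * (B:ℂ) * Complex.sin ((m:ℂ)*(x:ℂ))) * Complex.I_sq

lemma integral_exp_trig (k : ℤ) (m : ℕ) (A B : ℝ) :
    (∫ x in (0:ℝ)..(2*π), Complex.exp (-(Complex.I*k*x)) * ((A * Real.cos (m*x) + B * Real.sin (m*x) : ℝ) : ℂ))
      = ((A:ℂ) - Complex.I*B)/2 * (if (m:ℤ) - k = 0 then (2*π:ℂ) else 0)
        + ((A:ℂ) + Complex.I*B)/2 * (if -(m:ℤ) - k = 0 then (2*π:ℂ) else 0) := by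
  rw [intervalIntegral.integral_congr (g := fun x : ℝ =>
      ((A:ℂ) - Complex.I*B)/2 * Complex.exp (Complex.I*(((m:ℤ) - k : ℤ):ℂ)*x)
        + ((A:ℂ) + Complex.I*B)/2 * Complex.exp (Complex.I*((-(m:ℤ) - k : ℤ):ℂ)*x))
    (fun x _ => exp_trig_pt k m A B x)]
  rw [intervalIntegral.integral_add, intervalIntegral.integral_const_mul,
    intervalIntegral.integral_const_mul, integral_exp_I, integral_exp_I]
  · exact (continuous_const.mul (by fun_prop : Continuous fun x : ℝ =>
      Complex.exp (Complex.I*(((m:ℤ) - k : ℤ):ℂ)*x))).intervalIntegrable _ _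
  · exact (continuous_const.mul (by fun_prop : Continuous fun x : ℝ =>
      Complex.exp (Complex.I*((-(m:ℤ) - k : ℤ):ℂ)*x))).intervalIntegrable _ _

lemma summable_coeff {a b : ℕ → ℝ}
    (hsum : Summable (fun n : ℕ => ((n : ℝ) ^ 2) * (a n ^ 2 + b n ^ 2))) :
    Summable (fun n : ℕ => |a (n+1)| + |b (n+1)|) := by
  have h1 : Summable (fun n : ℕ => (((n+1 : ℕ) : ℝ) ^ 2) * (a (n+1) ^ 2 + b (n+1) ^ 2)) :=
    (summable_nat_add_iff (f := fun n : ℕ => ((n : ℝ) ^ 2) * (a n ^ 2 + b n ^ 2)) 1).mpr hsum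
  have h2 : Summable (fun n : ℕ => 1 / (((n+1 : ℕ) : ℝ))^2) := by
    have hbase : Summable (fun n : ℕ => 1 / ((n : ℝ))^2) :=
      Real.summable_one_div_nat_pow.mpr (by norm_num)
    exact (summable_nat_add_iff (f := fun n : ℕ => 1 / ((n : ℝ))^2) 1).mpr hbase
  apply Summable.of_nonneg_of_le (fun n => by positivity) ?_ (h1.add h2)
  intro n
  set c : ℝ := ((n+1:ℕ):ℝ) with hc
  have hcpos : (0:ℝ) < c := by rw [hc]; positivity
  have hinv : c * (1/c) = 1 := mul_one_div_cancel (ne_of_gt hcpos)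
  have h3a : c * (1/c) * |a (n+1)| = |a (n+1)| := by rw [hinv, one_mul]
  have h3b : c * (1/c) * |b (n+1)| = |b (n+1)| := by rw [hinv, one_mul]
  have hA : 2*|a (n+1)| ≤ c^2*(a (n+1))^2 + (1/c)^2 := by
    nlinarith [sq_nonneg (c*|a (n+1)| - 1/c), sq_abs (a (n+1)), h3a]
  have hB : 2*|b (n+1)| ≤ c^2*(b (n+1))^2 + (1/c)^2 := by
    nlinarith [sq_nonneg (c*|b (n+1)| - 1/c), sq_abs (b (n+1)), h3b]
  have hS : 0 ≤ c^2*((a (n+1))^2 + (b (n+1))^2) := by positivity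
  have hgoal : |a (n+1)| + |b (n+1)| ≤ c^2*((a (n+1))^2 + (b (n+1))^2) + (1/c)^2 := by
    nlinarith [hA, hB, hS]
  calc |a (n+1)| + |b (n+1)| ≤ c^2*((a (n+1))^2 + (b (n+1))^2) + (1/c)^2 := hgoal
    _ = c ^ 2 * (a (n+1) ^ 2 + b (n+1) ^ 2) + 1 / c^2 := by rw [div_pow, one_pow]

lemma fc_series {p : ℝ → ℝ} {a b : ℕ → ℝ} (hcp : Continuous p)
    (hs : Summable (fun n : ℕ => |a (n+1)| + |b (n+1)|))
    (hfour : ∀ θ : ℝ, p θ = a 0 +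
      ∑' n : ℕ, (a (n+1) * Real.cos ((n+1 : ℕ) * θ) + b (n+1) * Real.sin ((n+1 : ℕ) * θ)))
    (k : ℤ) (hk : k ≠ 0) :
    fc p k = (if 0 ≤ k then ((a k.natAbs : ℂ) - Complex.I * (b k.natAbs : ℂ))/2
              else ((a k.natAbs : ℂ) + Complex.I * (b k.natAbs : ℂ))/2) := by
  set T : ℕ → C(ℝ, ℂ) := fun n =>
    ⟨fun x => Complex.exp (-(Complex.I*k*x)) *
      ((a (n+1) * Real.cos ((n+1 : ℕ) * x) + b (n+1) * Real.sin ((n+1 : ℕ) * x) : ℝ) : ℂ),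
     by fun_prop⟩ with hT
  have hTbound : ∀ n : ℕ, ∀ x : ℝ, ‖T n x‖ ≤ |a (n+1)| + |b (n+1)| := by
    intro n x
    rw [hT]
    simp only [ContinuousMap.coe_mk]
    rw [norm_mul, norm_exp_neg, one_mul, Complex.norm_real, Real.norm_eq_abs]
    calc |a (n+1) * Real.cos ((n+1 : ℕ) * x) + b (n+1) * Real.sin ((n+1 : ℕ) * x)|
        ≤ |a (n+1) * Real.cos ((n+1 : ℕ) * x)| + |b (n+1) * Real.sin ((n+1 : ℕ) * x)| := abs_add_le _ _
      _ ≤ |a (n+1)| + |b (n+1)| := by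
          rw [abs_mul, abs_mul]
          gcongr
          · calc |a (n+1)| * |Real.cos ((n+1 : ℕ) * x)| ≤ |a (n+1)| * 1 :=
              mul_le_mul_of_nonneg_left (Real.abs_cos_le_one _) (abs_nonneg _)
            _ = |a (n+1)| := mul_one _
          · calc |b (n+1)| * |Real.sin ((n+1 : ℕ) * x)| ≤ |b (n+1)| * 1 :=
              mul_le_mul_of_nonneg_left (Real.abs_sin_le_one _) (abs_nonneg _)
            _ = |b (n+1)| := mul_one _
  have hrest : Summable (fun n : ℕ =>
      ‖(T n).restrict (⟨uIcc (0:ℝ) (2*π), isCompact_uIcc⟩ : TopologicalSpace.Compacts ℝ)‖) := by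
    apply Summable.of_nonneg_of_le (fun n => norm_nonneg _) ?_ hs
    intro n
    apply (ContinuousMap.norm_le _ (by positivity)).mpr
    intro z
    exact hTbound n z
  have hHS := hasSum_intervalIntegral_of_summable_norm (a := 0) (b := 2*π) hrest
  -- pointwise tsum
  have hpt : ∀ x : ℝ, (∑' n : ℕ, (T n) x)
      = Complex.exp (-(Complex.I*k*x)) * ((p x : ℝ):ℂ)
        - Complex.exp (-(Complex.I*k*x)) * ((a 0 : ℝ):ℂ) := by
    intro x
    have hsx : Summable (fun n : ℕ =>
        a (n+1) * Real.cos ((n+1 : ℕ) * x) + b (n+1) * Real.sin ((n+1 : ℕ) * x)) := by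
      apply Summable.of_norm_bounded hs
      intro n
      rw [Real.norm_eq_abs]
      have := hTbound n x
      rw [hT] at this
      simp only [ContinuousMap.coe_mk] at this
      rwa [norm_mul, norm_exp_neg, one_mul, Complex.norm_real, Real.norm_eq_abs] at this
    have h1 : HasSum (fun n : ℕ =>
        ((a (n+1) * Real.cos ((n+1 : ℕ) * x) + b (n+1) * Real.sin ((n+1 : ℕ) * x) : ℝ) : ℂ))
        (((∑' n : ℕ, (a (n+1) * Real.cos ((n+1 : ℕ) * x) + b (n+1) * Real.sin ((n+1 : ℕ) * x)) : ℝ) : ℂ)) :=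
      hsx.hasSum.mapL Complex.ofRealCLM
    have h2 := h1.mul_left (Complex.exp (-(Complex.I*k*x)))
    have h3 : ((∑' n : ℕ, (a (n+1) * Real.cos ((n+1 : ℕ) * x) + b (n+1) * Real.sin ((n+1 : ℕ) * x)) : ℝ))
        = p x - a 0 := by
      rw [hfour x]; ring
    rw [h3] at h2
    have h4 := h2.tsum_eq
    simp only [hT, ContinuousMap.coe_mk]
    rw [h4]
    push_cast
    ring
  have hconst : (∫ x in (0:ℝ)..(2*π), Complex.exp (-(Complex.I*k*x)) * ((a 0 : ℝ):ℂ)) = 0 := by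
    have h := fc_const (a 0) k hk
    rw [fc] at h
    rcases mul_eq_zero.mp h with h | h
    · exfalso
      have : ((2*π:ℝ):ℂ) ≠ 0 := by exact_mod_cast (ne_of_gt two_pi_pos)
      simp only [div_eq_zero_iff, one_ne_zero, false_or] at h
      exact (by exact_mod_cast this : (2*(π:ℂ)) ≠ 0) h
    · exact h
  have hint_eq : (∫ x in (0:ℝ)..(2*π), ∑' n : ℕ, (T n) x)
      = ∫ x in (0:ℝ)..(2*π), Complex.exp (-(Complex.I*k*x)) * ((p x : ℝ):ℂ) := by
    rw [intervalIntegral.integral_congr (g := fun x => Complex.exp (-(Complex.I*k*x)) * ((p x : ℝ):ℂ)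
        - Complex.exp (-(Complex.I*k*x)) * ((a 0 : ℝ):ℂ)) (fun x _ => hpt x)]
    rw [intervalIntegral.integral_sub, hconst, sub_zero]
    · exact ((cont_exp_neg k).mul (Complex.continuous_ofReal.comp hcp)).intervalIntegrable _ _
    · exact ((cont_exp_neg k).mul continuous_const).intervalIntegrable _ _
  rw [hint_eq] at hHS
  -- values of individual integrals
  have hval : ∀ n : ℕ, (∫ x in (0:ℝ)..(2*π), (T n) x)
      = ((a (n+1):ℂ) - Complex.I*(b (n+1)))/2 * (if ((n+1:ℕ):ℤ) - k = 0 then (2*π:ℂ) else 0)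
        + ((a (n+1):ℂ) + Complex.I*(b (n+1)))/2 * (if -((n+1:ℕ):ℤ) - k = 0 then (2*π:ℂ) else 0) := by
    intro n
    simp only [hT, ContinuousMap.coe_mk]
    exact integral_exp_trig k (n+1) (a (n+1)) (b (n+1))
  set N := k.natAbs with hN
  have hN1 : 1 ≤ N := by
    rw [hN]
    omega
  have htsum := hHS.tsum_eq
  have hpi2 : ((2*π:ℝ):ℂ) ≠ 0 := by exact_mod_cast (ne_of_gt two_pi_pos)
  rcases le_or_gt 0 k with hpos | hneg
  · have hkN : k = (N:ℤ) := by rw [hN]; omega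
    have hsingle : ∀ n : ℕ, n ≠ N - 1 → (∫ x in (0:ℝ)..(2*π), (T n) x) = 0 := by
      intro n hn
      rw [hval n, if_neg (by omega), if_neg (by omega)]
      ring
    have hmain : (∫ x in (0:ℝ)..(2*π), (T (N-1)) x)
        = ((a N :ℂ) - Complex.I*(b N))/2 * (2*π:ℂ) := by
      rw [hval (N-1), if_pos (by omega), if_neg (by omega)]
      rw [show (N-1)+1 = N by omega]
      ring
    have : (∑' n : ℕ, ∫ x in (0:ℝ)..(2*π), (T n) x) = ((a N :ℂ) - Complex.I*(b N))/2 * (2*π:ℂ) := by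
      rw [tsum_eq_single (N-1) hsingle, hmain]
    rw [fc, ← htsum, this, if_pos hpos]
    rw [show ((2*π:ℝ):ℂ) = 2*(π:ℂ) by push_cast; ring] at hpi2
    field_simp
  · have hkN : k = -(N:ℤ) := by rw [hN]; omega
    have hsingle : ∀ n : ℕ, n ≠ N - 1 → (∫ x in (0:ℝ)..(2*π), (T n) x) = 0 := by
      intro n hn
      rw [hval n, if_neg (by omega), if_neg (by omega)]
      ring
    have hmain : (∫ x in (0:ℝ)..(2*π), (T (N-1)) x)
        = ((a N :ℂ) + Complex.I*(b N))/2 * (2*π:ℂ) := by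
      rw [hval (N-1), if_neg (by omega), if_pos (by omega)]
      rw [show (N-1)+1 = N by omega]
      ring
    have : (∑' n : ℕ, ∫ x in (0:ℝ)..(2*π), (T n) x) = ((a N :ℂ) + Complex.I*(b N))/2 * (2*π:ℂ) := by
      rw [tsum_eq_single (N-1) hsingle, hmain]
    rw [fc, ← htsum, this, if_neg (by omega)]
    rw [show ((2*π:ℝ):ℂ) = 2*(π:ℂ) by push_cast; ring] at hpi2
    field_simp
/-- Stability of the improved isoperimetric inequality with respect to the
`L²`-distance: `L² - 4πA - 8π|Ã| ≥ 6π·d₂(K, W_K)²`, with equality iff all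
even-index Fourier coefficients of `p` with index `≥ 4` vanish. -/
theorem stability_L2 (p pW : ℝ → ℝ) (hp : ContDiff ℝ (⊤ : ℕ∞) p)
    (hper : Function.Periodic p (2 * π))
    (hpos : ∀ θ : ℝ, 0 < p θ + deriv (deriv p) θ)
    (a b : ℕ → ℝ)
    (hsum : Summable (fun n : ℕ => ((n : ℝ) ^ 2) * (a n ^ 2 + b n ^ 2)))
    (hfour : ∀ θ : ℝ, p θ = a 0 +
      ∑' n : ℕ, (a (n+1) * cos ((n+1 : ℕ) * θ) + b (n+1) * sin ((n+1 : ℕ) * θ)))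
    (q : ℝ → ℝ) (hq : ∀ θ : ℝ, q θ = (p θ - p (θ + π)) / 2)
    (L A At d2sq : ℝ)
    (hL : L = ∫ θ in (0:ℝ)..(2 * π), p θ)
    (hA : A = (1/2) * ∫ θ in (0:ℝ)..(2 * π), (p θ ^ 2 - deriv p θ ^ 2))
    (hAt : At = (1/4) * ∫ θ in (0:ℝ)..(2 * π), (q θ ^ 2 - deriv q θ ^ 2))
    (hpW : ∀ θ : ℝ, pW θ = L / (2 * π) + (p θ - p (θ + π)) / 2)
    (hd2 : d2sq = ∫ θ in (0:ℝ)..(2 * π), |p θ - pW θ| ^ 2) :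
    L ^ 2 - 4 * π * A - 8 * π * |At| ≥ 6 * π * d2sq ∧
      (L ^ 2 - 4 * π * A - 8 * π * |At| = 6 * π * d2sq ↔
        ∀ n : ℕ, 4 ≤ n → Even n → a n = 0 ∧ b n = 0) := by
  have hπ : (0:ℝ) < π := pi_pos
  have hcp : Continuous p := hp.continuous
  have hdp : Differentiable ℝ p := hp.differentiable (by simp)
  set C : ℝ := L / (2*π) with hCdef
  have hqdef : q = fun θ => (p θ - p (θ + π))/2 := funext hq
  have hshift : ContDiff ℝ (⊤ : ℕ∞) (fun θ : ℝ => p (θ + π)) := hp.comp (contDiff_id.add contDiff_const)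
  have hqs : ContDiff ℝ (⊤ : ℕ∞) q := by rw [hqdef]; exact (hp.sub hshift).div_const 2
  set e : ℝ → ℝ := fun θ => p θ - C - q θ with hedef
  have hes : ContDiff ℝ (⊤ : ℕ∞) e := (hp.sub contDiff_const).sub hqs
  have hcq := hqs.continuous
  have hce := hes.continuous
  have hdq : Differentiable ℝ q := hqs.differentiable (by simp)
  have hde : Differentiable ℝ e := hes.differentiable (by simp)
  have hdqc : Continuous (deriv q) := (contDiff_infty_iff_deriv.mp (hqs.of_le (by simp))).2.continuous
  have hdec : Continuous (deriv e) := (contDiff_infty_iff_deriv.mp (hes.of_le (by simp))).2.continuous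
  have hdpc : Continuous (deriv p) := (contDiff_infty_iff_deriv.mp (hp.of_le (by simp))).2.continuous
  -- periodicity
  have hperq : Function.Periodic q (2*π) := by
    intro x
    rw [hqdef]
    simp only
    rw [hper x, show x + 2*π + π = (x + π) + 2*π by ring, hper (x+π)]
  have hpere : Function.Periodic e (2*π) := by
    intro x
    simp only [hedef]
    rw [hper x, hperq x]
  have hqanti : ∀ θ, q (θ + π) = - q θ := by
    intro θ
    rw [hq (θ + π), hq θ, show θ + π + π = θ + 2*π by ring, hper θ]
    ring
  have heper2 : ∀ θ, e (θ + π) = e θ := by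
    intro θ
    simp only [hedef]
    rw [hqanti θ, hq θ]
    ring
  -- derivative formulas
  have hdqf : ∀ θ, deriv q θ = (deriv p θ - deriv p (θ + π))/2 := by
    intro θ
    rw [hqdef, deriv_div_const, deriv_fun_sub (hdp θ) ((hshift.differentiable (by simp)) θ),
      deriv_comp_add_const]
  have hdesplit : ∀ θ, deriv e θ = deriv p θ - deriv q θ := by
    intro θ
    rw [hedef]
    rw [deriv_fun_sub (f := fun θ => p θ - C) ((hdp θ).sub (differentiableAt_const C)) (hdq θ),
      deriv_fun_sub (hdp θ) (differentiableAt_const C), deriv_const']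
    ring
  have hdpsplit : ∀ θ, deriv p θ = deriv q θ + deriv e θ := by
    intro θ
    rw [hdesplit θ]
    ring
  have hdqanti : ∀ θ, deriv q (θ+π) = - deriv q θ := by
    intro θ
    have hfun : (fun y : ℝ => q (y + π)) = fun y : ℝ => - q y := funext hqanti
    calc deriv q (θ+π) = deriv (fun y : ℝ => q (y + π)) θ := (deriv_comp_add_const q π θ).symm
      _ = deriv (fun y : ℝ => - q y) θ := by rw [hfun]
      _ = - deriv q θ := deriv.neg
  have hdeper : ∀ θ, deriv e (θ+π) = deriv e θ := by
    intro θ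
    have hfun : (fun y : ℝ => e (y + π)) = e := funext heper2
    calc deriv e (θ+π) = deriv (fun y : ℝ => e (y + π)) θ := (deriv_comp_add_const e π θ).symm
      _ = deriv e θ := by rw [hfun]
  -- basic integrals
  have hIq0 : (∫ x in (0:ℝ)..(2*π), q x) = 0 := integral_antiperiodic_eq_zero hcq hqanti
  have hIe0 : (∫ x in (0:ℝ)..(2*π), e x) = 0 := by
    simp only [hedef]
    rw [intervalIntegral.integral_sub (f := fun θ => p θ - C) ((hcp.sub continuous_const).intervalIntegrable _ _)
      (hcq.intervalIntegrable _ _),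
      intervalIntegral.integral_sub (hcp.intervalIntegrable _ _)
      (continuous_const.intervalIntegrable _ _),
      hIq0, intervalIntegral.integral_const, ← hL]
    simp only [smul_eq_mul, sub_zero]
    rw [hCdef]
    field_simp
    ring
  have hIqe : (∫ x in (0:ℝ)..(2*π), q x * e x) = 0 :=
    integral_antiperiodic_eq_zero (hcq.mul hce)
      (fun θ => by rw [hqanti θ, heper2 θ]; ring)
  have hIq'e' : (∫ x in (0:ℝ)..(2*π), deriv q x * deriv e x) = 0 :=
    integral_antiperiodic_eq_zero (hdqc.mul hdec)
      (fun θ => by rw [hdqanti θ, hdeper θ]; ring)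
  -- Fourier coefficient facts
  have hfcq0 : fc q 0 = 0 := by rw [fc_zero, hIq0]; simp
  have hfce0 : fc e 0 = 0 := by rw [fc_zero, hIe0]; simp
  have hodd : ∀ k : ℤ, Odd k → fc e k = 0 := by
    intro k hk
    have h1 := fc_shift hce hpere k
    rw [show (fun x : ℝ => e (x + π)) = e from funext heper2, Odd.neg_one_zpow hk] at h1
    have h2 : (2:ℂ) * fc e k = 0 := by linear_combination h1
    exact (mul_eq_zero.mp h2).resolve_left two_ne_zero
  have heven : ∀ k : ℤ, k ≠ 0 → Even k → fc e k = fc p k := by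
    intro k hk hkeven
    have h1 : fc e k = fc (fun θ => p θ - C) k - fc q k := by
      rw [hedef]
      exact fc_sub (f := fun θ => p θ - C) (g := q) (hcp.sub continuous_const) hcq k
    have h2 : fc (fun θ => p θ - C) k = fc p k := by
      have h5 := fc_sub (f := p) (g := fun _ => C) hcp continuous_const k
      rw [fc_const C k hk, sub_zero] at h5
      exact h5
    have h3 : fc q k = 0 := by
      rw [hqdef]
      rw [fc_div_two (f := fun θ => p θ - p (θ + π)) k,
        fc_sub (f := p) (g := fun θ => p (θ + π)) hcp (hcp.comp (continuous_id.add continuous_const)) k,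
        fc_shift hcp hper k, Even.neg_one_zpow hkeven]
      ring
    rw [h1, h2, h3, sub_zero]
  -- Wirtinger inequalities
  obtain ⟨wq1, wq2, -⟩ := wirt hqs hperq 1 (by
    intro k hk
    have : k = 0 := by omega
    rw [this]; exact hfcq0)
  obtain ⟨we1, we2, we3⟩ := wirt hes hpere 2 (by
    intro k hk
    have hcase : k = 0 ∨ k = 1 ∨ k = -1 := by omega
    rcases hcase with rfl | rfl | rfl
    · exact hfce0
    · exact hodd 1 ⟨0, by ring⟩
    · exact hodd (-1) ⟨-1, by ring⟩)
  set SE := ∑' k : ℤ, (((k:ℝ)^2 - ((2:ℕ):ℝ)^2) * ‖fc e k‖^2) with hSE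
  set SQ := ∑' k : ℤ, (((k:ℝ)^2 - ((1:ℕ):ℝ)^2) * ‖fc q k‖^2) with hSQ
  -- integral splittings
  have hii : ∀ {f : ℝ → ℝ}, Continuous f → IntervalIntegrable f volume 0 (2*π) :=
    fun h => h.intervalIntegrable _ _
  have hpsplit : ∀ θ, p θ = C + q θ + e θ := by
    intro θ
    simp only [hedef]
    ring
  have hIp2 : (∫ x in (0:ℝ)..(2*π), (p x)^2)
      = 2*π*C^2 + (∫ x in (0:ℝ)..(2*π), (q x)^2) + (∫ x in (0:ℝ)..(2*π), (e x)^2) := by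
    rw [intervalIntegral.integral_congr (g := fun x =>
        (q x)^2 + ((e x)^2 + ((C^2) + (2*C*q x + (2*C*e x + 2*(q x * e x))))))
      (fun x _ => by rw [hpsplit x]; ring)]
    rw [intervalIntegral.integral_add (hii (by fun_prop)) (hii (by fun_prop)),
      intervalIntegral.integral_add (hii (by fun_prop)) (hii (by fun_prop)),
      intervalIntegral.integral_add (hii (by fun_prop)) (hii (by fun_prop)),
      intervalIntegral.integral_add (hii (by fun_prop)) (hii (by fun_prop)),
      intervalIntegral.integral_add (hii (by fun_prop)) (hii (by fun_prop)),
      intervalIntegral.integral_const_mul, intervalIntegral.integral_const_mul,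
      intervalIntegral.integral_const_mul, hIq0, hIe0, hIqe, intervalIntegral.integral_const]
    simp only [smul_eq_mul]
    ring
  have hIdp2 : (∫ x in (0:ℝ)..(2*π), (deriv p x)^2)
      = (∫ x in (0:ℝ)..(2*π), (deriv q x)^2) + (∫ x in (0:ℝ)..(2*π), (deriv e x)^2) := by
    rw [intervalIntegral.integral_congr (g := fun x =>
        (deriv q x)^2 + ((deriv e x)^2 + 2*(deriv q x * deriv e x)))
      (fun x _ => by rw [hdpsplit x]; ring)]
    rw [intervalIntegral.integral_add (hii (by fun_prop)) (hii (by fun_prop)),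
      intervalIntegral.integral_add (hii (by fun_prop)) (hii (by fun_prop)),
      intervalIntegral.integral_const_mul, hIq'e']
    ring
  -- A, At, d2sq in terms of the integrals
  have hAval : A = (1/2) * (2*π*C^2 + (∫ x in (0:ℝ)..(2*π), (q x)^2) + (∫ x in (0:ℝ)..(2*π), (e x)^2)
      - ((∫ x in (0:ℝ)..(2*π), (deriv q x)^2) + (∫ x in (0:ℝ)..(2*π), (deriv e x)^2))) := by
    rw [hA, intervalIntegral.integral_sub (hii (by fun_prop)) (hii (by fun_prop)), hIp2, hIdp2]
  have hAtval : At = (1/4) * ((∫ x in (0:ℝ)..(2*π), (q x)^2) - (∫ x in (0:ℝ)..(2*π), (deriv q x)^2)) := by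
    rw [hAt, intervalIntegral.integral_sub (hii (by fun_prop)) (hii (by fun_prop))]
  have hd2e : d2sq = ∫ x in (0:ℝ)..(2*π), (e x)^2 := by
    rw [hd2]
    apply intervalIntegral.integral_congr
    intro x _
    show |p x - pW x| ^ 2 = e x ^ 2
    rw [hpW x, ← hq x]
    simp only [hedef]
    rw [show p x - (C + q x) = p x - C - q x by ring, sq_abs]
  -- abstract the four integrals
  rw [show (((1:ℕ)):ℝ)^2 = 1 by norm_num] at wq1
  rw [show (((2:ℕ)):ℝ)^2 = 4 by norm_num] at we1
  set IQ2 : ℝ := ∫ x in (0:ℝ)..(2*π), (q x)^2 with hIQ2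
  set IQ2' : ℝ := ∫ x in (0:ℝ)..(2*π), (deriv q x)^2 with hIQ2'
  set IE2 : ℝ := ∫ x in (0:ℝ)..(2*π), (e x)^2 with hIE2
  set IE2' : ℝ := ∫ x in (0:ℝ)..(2*π), (deriv e x)^2 with hIE2'
  -- At ≤ 0
  have hAtnp : At ≤ 0 := by
    have hAt2 : At = -(π*SQ)/2 := by
      rw [hAtval]
      linear_combination (-(1:ℝ)/4)*wq1
    rw [hAt2]
    have h1 : 0 ≤ π*SQ := mul_nonneg hπ.le wq2
    linarith
  have habs : |At| = -At := abs_of_nonpos hAtnp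
  have hLC : L = 2*π*C := by rw [hCdef]; field_simp
  have hfinal : L^2 - 4*π*A - 8*π*|At| = 2*π*(IE2' - IE2) := by
    rw [habs, hAval, hAtval, hLC]
    ring
  -- the coefficient transfer
  have hfcp := fc_series hcp (summable_coeff hsum) hfour
  have claim : (∀ k : ℤ, 2 < k.natAbs → fc e k = 0) ↔
      (∀ n : ℕ, 4 ≤ n → Even n → a n = 0 ∧ b n = 0) := by
    constructor
    · intro h n hn4 hne
      have hk1 : ((n:ℤ)).natAbs = n := Int.natAbs_natCast n
      have hn0 : ((n:ℤ)) ≠ 0 := by omega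
      have hev1 : Even ((n:ℤ)) := (Int.even_coe_nat n).mpr hne
      have heq1 : fc p (n:ℤ) = 0 := by
        rw [← heven _ hn0 hev1]
        exact h _ (by omega)
      have heq2 : fc p (-(n:ℤ)) = 0 := by
        rw [← heven _ (by omega) hev1.neg]
        exact h _ (by rw [Int.natAbs_neg, hk1]; omega)
      rw [hfcp _ hn0, if_pos (by omega)] at heq1
      rw [hfcp _ (by omega), if_neg (by omega)] at heq2
      rw [hk1] at heq1
      rw [Int.natAbs_neg, hk1] at heq2
      have hA0 : ((a n : ℝ) : ℂ) = 0 := by linear_combination heq1 + heq2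
      have hB0 : Complex.I * ((b n : ℝ) : ℂ) = 0 := by linear_combination heq2 - heq1
      refine ⟨by exact_mod_cast hA0, ?_⟩
      have := (mul_eq_zero.mp hB0).resolve_left Complex.I_ne_zero
      exact_mod_cast this
    · intro h k hk
      rcases Int.even_or_odd k with hev | hod
      · have hk0 : k ≠ 0 := by omega
        have hne : Even k.natAbs := Int.natAbs_even.mpr hev
        have hn4 : 4 ≤ k.natAbs := by
          obtain ⟨m, hm⟩ := hne
          omega
        obtain ⟨ha0, hb0⟩ := h k.natAbs hn4 hne
        rw [heven k hk0 hev, hfcp k hk0]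
        rcases le_or_gt 0 k with h0 | h0
        · rw [if_pos h0, ha0, hb0]
          simp
        · rw [if_neg (not_le.mpr h0), ha0, hb0]
          simp
      · exact hodd k hod
  -- conclusion
  have hkey : 2*π*(IE2' - IE2) - 6*π*IE2 = 4*π^2*SE := by
    linear_combination (2*π)*we1
  constructor
  · rw [hfinal, hd2e]
    have h1 : 0 ≤ 4*π^2*SE := mul_nonneg (by positivity) we2
    linarith
  · rw [hfinal, hd2e]
    constructor
    · intro heq
      have hSe0 : SE = 0 := by
      -- 4π²·SE = 0 from heq and hkey
        have h1 : 4*π^2*SE = 0 := by linarith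
        have h2 : (4*π^2 : ℝ) ≠ 0 := by positivity
        exact (mul_eq_zero.mp h1).resolve_left h2
      exact claim.mp (we3.mp hSe0)
    · intro hab
      have hSe0 : SE = 0 := we3.mpr (claim.mpr hab)
      rw [hSe0] at hkey
      linarith
end
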